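/- arXiv:math/9906030 — 7 statements merged into one kernel-verified Lean document; each statement's English description precedes it below -/
import Mathlib

section
/- If K is an algebraically closed field and G is a divisible linearly ordered abelian group, then the Hahn series field K((t^G)) is algebraically closed. -/
/-!
The proof is a transfinite Newton method. Suppose `p` has no root. At each `x` the largest slope
`γ x` of the Newton polygon of `p` at `x` lies in `Γ` because `Γ` is divisible, and the residue
polynomial of the edge of that slope has a root `a` in the algebraically closed residue field, so
`z = x + a t^γ` satisfies `v (z - x) ≥ γ x` and `v (p z) > v (p x)`. Such steps make `γ` strictly
increase, so along a chain of steps the balls `B(x, γ x)` are nested. Hahn series are spherically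
complete, so a point in all of them continues the chain, and Zorn's lemma gives a point from which
no further step is possible, which is a contradiction.
-/

open Polynomial Finset

universe u

theorem Polynomial.eval_eq_sum_range_taylor {R : Type*} [CommRing R] (p : R[X]) (x z : R) :
    p.eval z = ∑ i ∈ range (p.natDegree + 1), (taylor x p).coeff i * (z - x) ^ i := by
  rw [← taylor_eval_sub x, eval_eq_sum_range, natDegree_taylor]

namespace AddValuation

variable {F : Type u} {Γ : Type*} [AddCommGroup Γ] [LinearOrder Γ] [IsOrderedAddMonoid Γ]

section CommRing

variable [CommRing F] (v : AddValuation F (WithTop Γ))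

/-- `δ` bounds the slopes of the Newton polygon of `p` at `x`: every Taylor term
`(taylor x p).coeff j * h ^ j` with `v h ≥ δ` has value at least `v (p.eval x)`. -/
def IsSlopeBound (p : F[X]) (x : F) (δ : Γ) : Prop :=
  ∀ j : ℕ, v (p.eval x) ≤ j • (δ : WithTop Γ) + v ((taylor x p).coeff j)

/-- Every nested family of closed balls `{y | ρ i ≤ v (y - x i)}` has a common point. -/
def IsSphericallyComplete : Prop :=
  ∀ {ι : Type u} (x : ι → F) (ρ : ι → Γ),
    (∀ i j, ρ i ≤ ρ j → (ρ i : WithTop Γ) ≤ v (x j - x i)) →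
      ∃ y, ∀ i, (ρ i : WithTop Γ) ≤ v (y - x i)

variable {v} {p : F[X]}

theorem IsSlopeBound.le_map_eval {x z : F} {δ : Γ} (hδ : v.IsSlopeBound p x δ)
    (hz : (δ : WithTop Γ) ≤ v (z - x)) : v (p.eval x) ≤ v (p.eval z) := by
  rw [eval_eq_sum_range_taylor p x z]
  refine v.map_le_sum fun i _ => ?_
  calc v (p.eval x) ≤ i • (δ : WithTop Γ) + v ((taylor x p).coeff i) := hδ i
    _ ≤ i • v (z - x) + v ((taylor x p).coeff i) := by gcongr
    _ = v ((taylor x p).coeff i * (z - x) ^ i) := by rw [v.map_mul, v.map_pow, add_comm]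

theorem IsSlopeBound.lt_of_map_eval_lt {a b : F} {δ ε : Γ} (hε : v.IsSlopeBound p b ε)
    (hab : (δ : WithTop Γ) ≤ v (b - a)) (hlt : v (p.eval a) < v (p.eval b)) : δ < ε := by
  have hba : (δ : WithTop Γ) ≤ v (a - b) := v.map_sub_swap b a ▸ hab
  obtain ⟨i, hi⟩ : ∃ i, i • (δ : WithTop Γ) + v ((taylor b p).coeff i) ≤ v (p.eval a) := by
    by_contra! hbig
    refine lt_irrefl (v (p.eval a)) ?_
    conv_rhs => rw [eval_eq_sum_range_taylor p b a]
    refine v.map_lt_sum hlt.ne_top fun i _ => ?_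
    calc v (p.eval a) < i • (δ : WithTop Γ) + v ((taylor b p).coeff i) := hbig i
      _ ≤ i • v (a - b) + v ((taylor b p).coeff i) := by gcongr
      _ = v ((taylor b p).coeff i * (a - b) ^ i) := by rw [v.map_mul, v.map_pow, add_comm]
  have : i • (δ : WithTop Γ) < i • (ε : WithTop Γ) :=
    lt_of_add_lt_add_right ((hi.trans_lt hlt).trans_le (hε i))
  exact WithTop.coe_lt_coe.1 (lt_of_nsmul_lt_nsmul_right i this)

variable (v p) in
def NewtonStep (γ : F → Γ) (a b : F) : Prop :=
  (γ a : WithTop Γ) ≤ v (b - a) ∧ v (p.eval a) < v (p.eval b)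

variable {γ : F → Γ} {a b c : F}

theorem NewtonStep.slope_lt (hγ : ∀ x, v.IsSlopeBound p x (γ x)) (h : v.NewtonStep p γ a b) :
    γ a < γ b :=
  (hγ b).lt_of_map_eval_lt h.1 h.2

theorem NewtonStep.trans (hγ : ∀ x, v.IsSlopeBound p x (γ x)) (hab : v.NewtonStep p γ a b)
    (hbc : v.NewtonStep p γ b c) : v.NewtonStep p γ a c := by
  refine ⟨?_, hab.2.trans hbc.2⟩
  calc (γ a : WithTop Γ)
      ≤ min (v (c - b)) (v (b - a)) :=
        le_min ((WithTop.coe_le_coe.2 (hab.slope_lt hγ).le).trans hbc.1) hab.1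
    _ ≤ v (c - b + (b - a)) := v.map_add _ _
    _ = v (c - a) := by rw [sub_add_sub_cancel]

theorem exists_forall_newtonStep_of_noMax (hv : v.IsSphericallyComplete)
    (hγ : ∀ x, v.IsSlopeBound p x (γ x)) {s : Set F} (hs : IsChain (v.NewtonStep p γ) s)
    (hsucc : ∀ a ∈ s, ∃ b ∈ s, v.NewtonStep p γ a b) :
    ∃ y, ∀ a ∈ s, v.NewtonStep p γ a y := by
  obtain ⟨y, hy⟩ := hv (fun a : s => (a : F)) (fun a => γ a) <| by
    rintro ⟨a, ha⟩ ⟨b, hb⟩ hab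
    obtain rfl | hne := eq_or_ne a b
    · simp
    rcases hs ha hb hne with h | h
    · exact h.1
    · exact absurd hab (not_le.2 (h.slope_lt hγ))
  refine ⟨y, fun a ha => ⟨hy ⟨a, ha⟩, ?_⟩⟩
  obtain ⟨b, hb, hab⟩ := hsucc a ha
  exact hab.2.trans_le ((hγ b).le_map_eval (hy ⟨b, hb⟩))

theorem exists_forall_newtonStep_of_isChain (hv : v.IsSphericallyComplete)
    (hγ : ∀ x, v.IsSlopeBound p x (γ x)) (hnext : ∀ x, ∃ z, v.NewtonStep p γ x z)
    {s : Set F} (hs : IsChain (v.NewtonStep p γ) s) : ∃ y, ∀ a ∈ s, v.NewtonStep p γ a y := by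
  by_cases hsucc : ∀ a ∈ s, ∃ b ∈ s, v.NewtonStep p γ a b
  · exact exists_forall_newtonStep_of_noMax hv hγ hs hsucc
  push Not at hsucc
  obtain ⟨m, hm, hmax⟩ := hsucc
  obtain ⟨z, hz⟩ := hnext m
  refine ⟨z, fun a ha => ?_⟩
  obtain rfl | hne := eq_or_ne a m
  · exact hz
  · exact ((hs ha hm hne).resolve_right (hmax a ha)).trans hγ hz

theorem IsSphericallyComplete.exists_eval_eq_zero (hv : v.IsSphericallyComplete)
    (hstep : ∀ x, p.eval x ≠ 0 → ∃ γ : Γ, v.IsSlopeBound p x γ ∧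
      ∃ z, (γ : WithTop Γ) ≤ v (z - x) ∧ v (p.eval x) < v (p.eval z)) :
    ∃ x, p.eval x = 0 := by
  by_contra! hroot
  choose γ hγ next hnext hlt using fun x => hstep x (hroot x)
  have hstep_next (x : F) : v.NewtonStep p γ x (next x) := ⟨hnext x, hlt x⟩
  obtain ⟨m, hm⟩ := exists_maximal_of_chains_bounded
    (fun _ hs => exists_forall_newtonStep_of_isChain hv hγ (fun x => ⟨_, hstep_next x⟩) hs)
    (fun hab hbc => hab.trans hγ hbc)
  exact lt_irrefl _ ((hstep_next m).trans hγ (hm _ (hstep_next m))).2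

end CommRing

theorem exists_isSlopeBound {F : Type*} [Field F] (v : AddValuation F (WithTop Γ))
    (hdiv : ∀ (g : Γ) (n : ℕ), 0 < n → ∃ h : Γ, n • h = g) {p : F[X]} (hp : 0 < p.natDegree)
    {x : F} (hx : p.eval x ≠ 0) :
    ∃ γ : Γ, v.IsSlopeBound p x γ ∧
      ∃ i ≠ 0, v (p.eval x) = i • (γ : WithTop Γ) + v ((taylor x p).coeff i) := by
  set q := taylor x p
  -- `γ` will be the largest of the slopes `s i = (v (p.eval x) - v (q.coeff i)) / i`.
  obtain ⟨d, hd⟩ := WithTop.ne_top_iff_exists.1 (v.ne_top_iff.2 hx)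
  have hslope : ∀ i ∈ q.support.erase 0,
      ∃ s : Γ, v (p.eval x) = i • (s : WithTop Γ) + v (q.coeff i) := by
    intro i hi
    obtain ⟨hi0, hiq⟩ := mem_erase.1 hi
    obtain ⟨e, he⟩ := WithTop.ne_top_iff_exists.1 (v.ne_top_iff.2 (mem_support_iff.1 hiq))
    obtain ⟨s, hs⟩ := hdiv (d - e) i (Nat.pos_of_ne_zero hi0)
    refine ⟨s, ?_⟩
    rw [← hd, ← he, ← WithTop.coe_nsmul, ← WithTop.coe_add, hs, sub_add_cancel]
  choose! s hs using hslope
  have hn : p.natDegree ∈ q.support.erase 0 := by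
    refine mem_erase.2 ⟨hp.ne', ?_⟩
    rw [← natDegree_taylor p x]
    exact natDegree_mem_support_of_nonzero (ne_zero_of_natDegree_gt (n := 0) (by
      rwa [natDegree_taylor]))
  obtain ⟨i, hi, hmax⟩ := (q.support.erase 0).exists_max_image s ⟨_, hn⟩
  refine ⟨s i, fun j => ?_, i, (mem_erase.1 hi).1, hs i hi⟩
  obtain rfl | hj0 := eq_or_ne j 0
  · simp [taylor_coeff_zero]
  by_cases hj : j ∈ q.support
  · calc v (p.eval x) = j • (s j : WithTop Γ) + v (q.coeff j) := hs j (mem_erase.2 ⟨hj0, hj⟩)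
      _ ≤ j • (s i : WithTop Γ) + v (q.coeff j) := by
        gcongr; exact WithTop.coe_le_coe.2 (hmax j (mem_erase.2 ⟨hj0, hj⟩))
  · rw [notMem_support_iff.1 hj, map_zero, add_top]
    exact le_top

end AddValuation

namespace HahnSeries

variable {Γ : Type*}

theorem exists_forall_coeff_eq [LinearOrder Γ] {R : Type*} [Zero R] {ι : Type*}
    (x : ι → HahnSeries Γ R) (ρ : ι → Γ)
    (hx : ∀ i j g, g < ρ i → g < ρ j → (x i).coeff g = (x j).coeff g) :
    ∃ y : HahnSeries Γ R, ∀ i g, g < ρ i → y.coeff g = (x i).coeff g := by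
  classical
  let f : Γ → R := fun g => if h : ∃ i, g < ρ i then (x h.choose).coeff g else 0
  have hf (i : ι) (g : Γ) (hg : g < ρ i) : f g = (x i).coeff g := by
    have h : ∃ i, g < ρ i := ⟨i, hg⟩
    simp only [f, dif_pos h]
    exact hx _ i g h.choose_spec hg
  have hsupp : (Function.support f).IsWF := by
    rw [Set.isWF_iff_no_descending_seq]
    intro u hu hmem
    obtain ⟨i, hi⟩ : ∃ i, u 0 < ρ i := by
      by_contra h
      exact hmem 0 (dif_neg h)
    refine Set.isWF_iff_no_descending_seq.1 (x i).isWF_support u hu fun k => ?_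
    have hk : u k < ρ i := (hu.antitone (Nat.zero_le k)).trans_lt hi
    simpa [hf i (u k) hk] using hmem k
  exact ⟨⟨f, hsupp.isPWO⟩, hf⟩

section ResiduePolynomial

variable [AddCommGroup Γ] [PartialOrder Γ] [IsOrderedAddMonoid Γ] {R : Type*} [CommRing R]

/-- The residue polynomial of the Newton polygon edge of slope `γ` through the value `d`. -/
noncomputable def residuePolynomial (q : (HahnSeries Γ R)[X]) (d γ : Γ) : R[X] :=
  ∑ i ∈ range (q.natDegree + 1), monomial i ((q.coeff i).coeff (d - i • γ))

theorem coeff_residuePolynomial {q : (HahnSeries Γ R)[X]} {d γ : Γ} {i : ℕ}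
    (hi : i ≤ q.natDegree) : (residuePolynomial q d γ).coeff i = (q.coeff i).coeff (d - i • γ) := by
  simp [residuePolynomial, coeff_monomial, Nat.lt_succ_of_le hi]

theorem eval_residuePolynomial (q : (HahnSeries Γ R)[X]) (d γ : Γ) (a : R) :
    (residuePolynomial q d γ).eval a = (q.eval (single γ a)).coeff d := by
  simp [residuePolynomial, eval_finsetSum, eval_eq_sum_range (p := q), coeff_sum, single_pow,
    coeff_mul_single]

end ResiduePolynomial

variable [AddCommGroup Γ] [LinearOrder Γ] [IsOrderedAddMonoid Γ] {K : Type*} [Field K]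

theorem isSphericallyComplete_addVal : (addVal Γ K).IsSphericallyComplete := by
  intro ι x ρ hx
  simp only [addVal_apply] at hx ⊢
  have hagree (i j : ι) (g : Γ) (hi : g < ρ i) (hij : ρ i ≤ ρ j) :
      (x i).coeff g = (x j).coeff g := by
    have := coeff_eq_zero_of_lt_orderTop ((WithTop.coe_lt_coe.2 hi).trans_le (hx i j hij))
    rwa [coeff_sub, sub_eq_zero, eq_comm] at this
  obtain ⟨y, hy⟩ := exists_forall_coeff_eq x ρ fun i j g hi hj =>
    (le_total (ρ i) (ρ j)).elim (hagree i j g hi) fun hji => (hagree j i g hj hji).symm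
  refine ⟨y, fun i => le_orderTop_iff_forall.2 fun g hg => ?_⟩
  rw [coeff_sub, hy i g (WithTop.coe_lt_coe.1 hg), sub_self]

theorem exists_addVal_eval_lt [IsAlgClosed K] {p : (HahnSeries Γ K)[X]} {x : HahnSeries Γ K}
    {γ : Γ} (hγ : (addVal Γ K).IsSlopeBound p x γ) {i : ℕ} (hi : i ≠ 0)
    (htight : addVal Γ K (p.eval x) = i • (γ : WithTop Γ) + addVal Γ K ((taylor x p).coeff i))
    (hx : p.eval x ≠ 0) :
    ∃ z, (γ : WithTop Γ) ≤ addVal Γ K (z - x) ∧ addVal Γ K (p.eval x) < addVal Γ K (p.eval z) := by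
  set q := taylor x p
  set d := (p.eval x).order
  have hd : addVal Γ K (p.eval x) = d := addVal_apply_of_ne hx
  have hqi : (q.coeff i).coeff (d - i • γ) ≠ 0 := by
    have hqi0 : q.coeff i ≠ 0 := by
      intro h
      simp [h, hd] at htight
    refine coeff_orderTop_ne ?_
    rw [← addVal_apply, addVal_apply_of_ne hqi0, WithTop.coe_eq_coe, eq_sub_iff_add_eq, add_comm]
    rw [hd, addVal_apply_of_ne hqi0, ← WithTop.coe_nsmul, ← WithTop.coe_add] at htight
    exact (WithTop.coe_eq_coe.1 htight).symm
  have hdeg : (residuePolynomial q d γ).degree ≠ 0 := by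
    refine ne_of_gt (lt_of_lt_of_le ?_ (le_degree_of_ne_zero (n := i) ?_))
    · exact_mod_cast Nat.pos_of_ne_zero hi
    · rwa [coeff_residuePolynomial (le_natDegree_of_ne_zero fun h => hqi (by simp [h]))]
  obtain ⟨a, ha⟩ := IsAlgClosed.exists_root _ hdeg
  have hz : (γ : WithTop Γ) ≤ addVal Γ K (single γ a + x - x) := by
    rw [add_sub_cancel_right, addVal_apply]
    exact orderTop_single_le
  refine ⟨single γ a + x, hz, (hγ.le_map_eval hz).lt_of_ne fun heq => ?_⟩
  have hcoeff : (p.eval (single γ a + x)).coeff d = 0 := by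
    rwa [← taylor_eval, ← eval_residuePolynomial]
  exact orderTop_ne_of_coeff_eq_zero hcoeff (by rw [← addVal_apply, ← heq, hd])

end HahnSeries

/-- If `K` is an algebraically closed field and `G` a divisible linearly ordered abelian
group, then the Hahn series field `K((t^G))` is algebraically closed. -/
theorem hahnSeries_isAlgClosed (K G : Type*) [Field K] [IsAlgClosed K]
    [AddCommGroup G] [LinearOrder G] [IsOrderedAddMonoid G]
    (hdiv : ∀ (g : G) (n : ℕ), 0 < n → ∃ h : G, n • h = g) :
    IsAlgClosed (HahnSeries G K) := by
  refine IsAlgClosed.of_exists_root _ fun p _ hirr => ?_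
  refine HahnSeries.isSphericallyComplete_addVal.exists_eval_eq_zero fun x hx => ?_
  obtain ⟨γ, hγ, i, hi, htight⟩ :=
    (HahnSeries.addVal G K).exists_isSlopeBound hdiv hirr.natDegree_pos hx
  exact ⟨γ, hγ, HahnSeries.exists_addVal_eval_lt hγ hi htight hx⟩
end

section
/- Let P(x) be a monic polynomial of degree n over an algebraically closed valued field whose valuation has divisible value group G. If s ∈ G is a slope of the Newton polygon of P with multiplicity m, then P has exactly m roots (with multiplicity) of valuation s. -/
/-!
For `v x = s`, the terms `p_j x ^ j` have valuations `v p_j + j s`; let `μ` be their minimum and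
`[a, b]` the hull of the indices attaining it. As for Gauss's lemma, `μ` adds under products and
so do `a` and `b`: at index `a + c` (resp. `b + d`) the product has one term of valuation exactly
`μ + ν` and all others larger, and outside `[a + c, b + d]` every term is larger. For `X - r` the
pair `(a, b)` is `(0, 0)`, `(0, 1)` or `(1, 1)` according as `v r < s`, `v r = s` or `v r > s`, so
for a monic split polynomial `b - a` is the number of roots of valuation `s`.
-/

open Polynomial

section
variable {G : Type*} [AddCommGroup G] [LinearOrder G] [IsOrderedAddMonoid G]

theorem WithTop.coe_le_add_coe_iff {g c : G} {y : WithTop G} :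
    (g : WithTop G) ≤ y + c ↔ ((g - c : G) : WithTop G) ≤ y := by
  induction y with
  | top => simp
  | coe y => rw [← WithTop.coe_add, WithTop.coe_le_coe, WithTop.coe_le_coe, sub_le_iff_le_add]

theorem WithTop.coe_lt_add_coe_iff {g c : G} {y : WithTop G} :
    (g : WithTop G) < y + c ↔ ((g - c : G) : WithTop G) < y := by
  induction y with
  | top => exact iff_of_true (WithTop.coe_lt_top g) (WithTop.coe_lt_top _)
  | coe y => rw [← WithTop.coe_add, WithTop.coe_lt_coe, WithTop.coe_lt_coe, sub_lt_iff_lt_add]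

theorem WithTop.coe_add_lt_add_of_lt_or_lt {μ ν : G} {x y : WithTop G} (hx : μ ≤ x)
    (hy : ν ≤ y) (h : μ < x ∨ ν < y) : ((μ + ν : G) : WithTop G) < x + y := by
  rw [WithTop.coe_add]
  rcases h with h | h
  · exact WithTop.add_lt_add_of_lt_of_le WithTop.coe_ne_top h hy
  · exact WithTop.add_lt_add_of_le_of_lt WithTop.coe_ne_top hx h

end

namespace AddValuation

variable {R G ι : Type*} [Ring R] [AddCommGroup G] [LinearOrder G] [IsOrderedAddMonoid G]
  (v : AddValuation R (WithTop G)) {t : Finset ι} {f : ι → R} {g c : G}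

theorem coe_le_map_sum_add (h : ∀ i ∈ t, (g : WithTop G) ≤ v (f i) + c) :
    (g : WithTop G) ≤ v (∑ i ∈ t, f i) + c :=
  WithTop.coe_le_add_coe_iff.2 <| v.map_le_sum fun i hi => WithTop.coe_le_add_coe_iff.1 (h i hi)

theorem coe_lt_map_sum_add (h : ∀ i ∈ t, (g : WithTop G) < v (f i) + c) :
    (g : WithTop G) < v (∑ i ∈ t, f i) + c :=
  WithTop.coe_lt_add_coe_iff.2 <|
    v.map_lt_sum WithTop.coe_ne_top fun i hi => WithTop.coe_lt_add_coe_iff.1 (h i hi)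

theorem map_sum_add_eq_of_lt [DecidableEq ι] {i₀ : ι} (hi₀ : i₀ ∈ t)
    (h₀ : v (f i₀) + c = g) (h : ∀ i ∈ t, i ≠ i₀ → (g : WithTop G) < v (f i) + c) :
    v (∑ i ∈ t, f i) + c = g := by
  have hrest : v (f i₀) < v (∑ i ∈ t.erase i₀, f i) := by
    rw [← WithTop.add_lt_add_iff_right (WithTop.coe_ne_top (a := c)), h₀]
    exact v.coe_lt_map_sum_add fun i hi =>
      h i (Finset.mem_of_mem_erase hi) (Finset.ne_of_mem_erase hi)
  rw [← Finset.add_sum_erase t f hi₀, v.map_add_eq_of_lt_left hrest, h₀]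

end AddValuation

namespace Polynomial

open Finset.HasAntidiagonal

section
variable {R G : Type*} [Ring R] [AddCommGroup G] [LinearOrder G] [IsOrderedAddMonoid G]
  (v : AddValuation R (WithTop G)) (s : G)

def termVal (p : R[X]) (j : ℕ) : WithTop G := v (p.coeff j) + ((j • s : G) : WithTop G)

/-- With `a_i = p.coeff (n - i)` for `n = p.natDegree`, this says that the line of slope `s`
supporting the Newton polygon of `p` touches it exactly over `[n - b, n - a]`. -/
structure IsNewtonSegment (p : R[X]) (a b : ℕ) (μ : G) : Prop where
  le : ∀ j, (μ : WithTop G) ≤ termVal v s p j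
  eq_left : termVal v s p a = μ
  eq_right : termVal v s p b = μ
  lt_of_lt_or_lt : ∀ j, j < a ∨ b < j → (μ : WithTop G) < termVal v s p j

variable {v s}

theorem termVal_mul_term {p q : R[X]} {k : ℕ} {x : ℕ × ℕ} (hx : x ∈ antidiagonal k) :
    v (p.coeff x.1 * q.coeff x.2) + ((k • s : G) : WithTop G) =
      termVal v s p x.1 + termVal v s q x.2 := by
  rw [mem_antidiagonal] at hx
  subst hx
  simp only [termVal, v.map_mul, add_nsmul, WithTop.coe_add]
  ac_rfl

theorem le_natDegree_of_termVal_ne_top {p : R[X]} {j : ℕ} (h : termVal v s p j ≠ ⊤) :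
    j ≤ p.natDegree :=
  le_natDegree_of_ne_zero fun h0 => h (by rw [termVal, h0, v.map_zero, top_add])

theorem termVal_mul (p q : R[X]) (k : ℕ) :
    termVal v s (p * q) k =
      v (∑ x ∈ antidiagonal k, p.coeff x.1 * q.coeff x.2) + ((k • s : G) : WithTop G) := by
  rw [termVal, coeff_mul]

namespace IsNewtonSegment

variable {p q : R[X]} {a b c d : ℕ} {μ ν : G}

theorem left_le_of_eq (h : IsNewtonSegment v s p a b μ) {j : ℕ} (hj : termVal v s p j = μ) :
    a ≤ j :=
  not_lt.1 fun hja => (h.lt_of_lt_or_lt j (.inl hja)).ne hj.symm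

theorem le_right_of_eq (h : IsNewtonSegment v s p a b μ) {j : ℕ} (hj : termVal v s p j = μ) :
    j ≤ b :=
  not_lt.1 fun hbj => (h.lt_of_lt_or_lt j (.inr hbj)).ne hj.symm

theorem mul (hp : IsNewtonSegment v s p a b μ) (hq : IsNewtonSegment v s q c d ν) :
    IsNewtonSegment v s (p * q) (a + c) (b + d) (μ + ν) := by
  have hlt {k : ℕ} : ∀ x ∈ antidiagonal k, (x.1 < a ∨ b < x.1) ∨ (x.2 < c ∨ d < x.2) →
      ((μ + ν : G) : WithTop G) < v (p.coeff x.1 * q.coeff x.2) + ((k • s : G) : WithTop G) := by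
    intro x hx hout
    rw [termVal_mul_term hx]
    exact WithTop.coe_add_lt_add_of_lt_or_lt (hp.le _) (hq.le _)
      (hout.imp (hp.lt_of_lt_or_lt _) (hq.lt_of_lt_or_lt _))
  refine ⟨fun k => ?_, ?_, ?_, fun k hk => ?_⟩ <;> rw [termVal_mul]
  · refine v.coe_le_map_sum_add fun x hx => ?_
    rw [termVal_mul_term hx, WithTop.coe_add]
    exact add_le_add (hp.le _) (hq.le _)
  · refine v.map_sum_add_eq_of_lt (i₀ := (a, c)) (by simp) ?_ fun x hx hne => hlt x hx ?_
    · rw [termVal_mul_term (by simp), hp.eq_left, hq.eq_left, WithTop.coe_add]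
    · rw [mem_antidiagonal] at hx
      simp only [Ne, Prod.ext_iff] at hne
      omega
  · refine v.map_sum_add_eq_of_lt (i₀ := (b, d)) (by simp) ?_ fun x hx hne => hlt x hx ?_
    · rw [termVal_mul_term (by simp), hp.eq_right, hq.eq_right, WithTop.coe_add]
    · rw [mem_antidiagonal] at hx
      simp only [Ne, Prod.ext_iff] at hne
      omega
  · refine v.coe_lt_map_sum_add fun x hx => hlt x hx ?_
    rw [mem_antidiagonal] at hx
    omega

end IsNewtonSegment

theorem isNewtonSegment_one : IsNewtonSegment v s 1 0 0 0 := by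
  refine ⟨fun j => ?_, by simp [termVal], by simp [termVal], fun j hj => ?_⟩
  · rcases j with _ | j
    · simp [termVal]
    · simp [termVal, coeff_one]
  · rcases j with _ | j
    · omega
    · simp [termVal, coeff_one]

@[simp]
theorem termVal_X_sub_C_zero (r : R) : termVal v s (X - C r) 0 = v r := by
  simp [termVal]

@[simp]
theorem termVal_X_sub_C_one (r : R) : termVal v s (X - C r) 1 = s := by
  simp [termVal]

@[simp]
theorem termVal_X_sub_C_add_two (r : R) (j : ℕ) : termVal v s (X - C r) (j + 2) = ⊤ := by
  simp [termVal, coeff_X]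

theorem isNewtonSegment_X_sub_C_of_lt {r : R} {g : G} (hr : v r = g) (hg : g < s) :
    IsNewtonSegment v s (X - C r) 0 0 g := by
  refine ⟨fun j => ?_, by simp [hr], by simp [hr], fun j hj => ?_⟩ <;>
    rcases j with _ | _ | j <;> simp_all [hg.le]

theorem isNewtonSegment_X_sub_C_of_eq {r : R} (hr : v r = s) :
    IsNewtonSegment v s (X - C r) 0 1 s := by
  refine ⟨fun j => ?_, by simp [hr], by simp, fun j hj => ?_⟩ <;>
    rcases j with _ | _ | j <;> simp_all

theorem isNewtonSegment_X_sub_C_of_gt {r : R} (hr : s < v r) :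
    IsNewtonSegment v s (X - C r) 1 1 s := by
  refine ⟨fun j => ?_, by simp, by simp, fun j hj => ?_⟩ <;>
    rcases j with _ | _ | j <;> simp_all [hr.le]

end

theorem exists_isNewtonSegment_prod_X_sub_C {R G : Type*} [CommRing R] [AddCommGroup G]
    [LinearOrder G] [IsOrderedAddMonoid G] (v : AddValuation R (WithTop G)) (s : G)
    (M : Multiset R) :
    ∃ μ : G, IsNewtonSegment v s (M.map (X - C ·)).prod (M.filter (s < v ·)).card
      ((M.filter (s < v ·)).card + (M.filter (v · = s)).card) μ := by
  induction M using Multiset.induction_on with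
  | empty => exact ⟨0, by simpa using isNewtonSegment_one⟩
  | cons r M ih =>
    obtain ⟨μ, hM⟩ := ih
    rw [Multiset.map_cons, Multiset.prod_cons]
    rcases lt_trichotomy (v r) s with hr | hr | hr
    · obtain ⟨g, hg⟩ := WithTop.ne_top_iff_exists.1 (hr.trans (WithTop.coe_lt_top s)).ne
      rw [Multiset.filter_cons_of_neg (p := (s < v ·)) _ hr.not_gt,
        Multiset.filter_cons_of_neg (p := (v · = s)) _ hr.ne]
      have hlin := isNewtonSegment_X_sub_C_of_lt hg.symm (WithTop.coe_lt_coe.1 (hg ▸ hr))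
      exact ⟨_, by simpa using hlin.mul hM⟩
    · rw [Multiset.filter_cons_of_neg (p := (s < v ·)) _ hr.not_gt,
        Multiset.filter_cons_of_pos (p := (v · = s)) _ hr, Multiset.card_cons]
      exact ⟨_, by convert (isNewtonSegment_X_sub_C_of_eq hr).mul hM using 1 <;> omega⟩
    · rw [Multiset.filter_cons_of_pos (p := (s < v ·)) _ hr,
        Multiset.filter_cons_of_neg (p := (v · = s)) _ hr.ne', Multiset.card_cons]
      exact ⟨_, by convert (isNewtonSegment_X_sub_C_of_gt hr).mul hM using 1 <;> omega⟩

end Polynomial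

theorem newton_polygon_roots_of_slope_general {L G : Type*} [Field L] [IsAlgClosed L]
    [AddCommGroup G] [LinearOrder G] [IsOrderedAddMonoid G]
    (v : AddValuation L (WithTop G))
    (P : Polynomial L) (hP : P.Monic) (s : G)
    (w : ℕ → WithTop G)
    (hw : ∀ j, w j = v (P.coeff j) + ((j • s : G) : WithTop G))
    (jmin jmax : ℕ)
    (hmin : ∀ j ≤ P.natDegree, w jmin ≤ w j)
    (hmaxmin : w jmax = w jmin)
    (hleast : ∀ j ≤ P.natDegree, w j = w jmin → jmin ≤ j)
    (hgreatest : ∀ j ≤ P.natDegree, w j = w jmin → j ≤ jmax) :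
    (P.roots.filter fun r => v r = (s : WithTop G)).card = jmax - jmin := by
  obtain ⟨μ, hseg⟩ := exists_isNewtonSegment_prod_X_sub_C v s P.roots
  rw [← (IsAlgClosed.splits P).eq_prod_roots_of_monic hP] at hseg
  obtain rfl : w = termVal v s P := funext hw
  have hleft_le := le_natDegree_of_termVal_ne_top (hseg.eq_left ▸ WithTop.coe_ne_top)
  have hright_le := le_natDegree_of_termVal_ne_top (hseg.eq_right ▸ WithTop.coe_ne_top)
  have hjmin : termVal v s P jmin = μ :=
    le_antisymm ((hmin _ hleft_le).trans_eq hseg.eq_left) (hseg.le jmin)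
  have hleft : jmin = _ :=
    le_antisymm (hleast _ hleft_le (hseg.eq_left.trans hjmin.symm)) (hseg.left_le_of_eq hjmin)
  have hright : jmax = _ :=
    le_antisymm (hseg.le_right_of_eq (hmaxmin.trans hjmin))
      (hgreatest _ hright_le (hseg.eq_right.trans hjmin.symm))
  rw [hleft, hright, Nat.add_sub_cancel_left]

/-- Newton polygons compute valuations of roots: let `P` be a monic polynomial of
degree `n` over an algebraically closed valued field `L` with divisible value group `G`,
and `s ∈ G`.  Writing `w j = v(P_j) + j • s` (where `P_j` is the coefficient of `x^j`),
let `jmin` and `jmax` be the least and greatest indices `j ≤ n` at which `w` attains its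
minimum.  Then the multiplicity of `s` as a slope of the Newton polygon of `P` is
`jmax - jmin`, and `P` has exactly `jmax - jmin` roots (with multiplicity) of
valuation `s`. -/
theorem newton_polygon_roots_of_slope {L G : Type*} [Field L] [IsAlgClosed L]
    [AddCommGroup G] [LinearOrder G] [IsOrderedAddMonoid G]
    (v : AddValuation L (WithTop G))
    (hdiv : ∀ (g : G) (n : ℕ), 0 < n → ∃ h : G, n • h = g)
    (P : Polynomial L) (hP : P.Monic) (s : G)
    (w : ℕ → WithTop G)
    (hw : ∀ j, w j = v (P.coeff j) + ((j • s : G) : WithTop G))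
    (jmin jmax : ℕ) (hminle : jmin ≤ P.natDegree) (hmaxle : jmax ≤ P.natDegree)
    (hmin : ∀ j ≤ P.natDegree, w jmin ≤ w j)
    (hmaxmin : w jmax = w jmin)
    (hleast : ∀ j ≤ P.natDegree, w j = w jmin → jmin ≤ j)
    (hgreatest : ∀ j ≤ P.natDegree, w j = w jmin → j ≤ jmax) :
    (P.roots.filter fun r => v r = (s : WithTop G)).card = jmax - jmin :=
  newton_polygon_roots_of_slope_general v P hP s w hw jmin jmax hmin hmaxmin hleast hgreatest
end

section
/- Let R be a p-adically complete and separated ring whose residue field R/pR is an algebraically closed field of characteristic p, and let σ be an automorphism of R lifting the Frobenius x ↦ x^p. Given d_0, ..., d_{n-1} ∈ R with d_0 not divisible by p, the set of solutions z ∈ R of z^{σ^n} + d_{n-1} z^{σ^{n-1}} + ... + d_1 z^σ + d_0 z = 0 is a free module of rank n over the fixed ring R_0 = {r ∈ R : r^σ = r}. -/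
open Polynomial

/-- The twisted additive polynomial over the residue field. -/
noncomputable def twPoly {K : Type*} [CommRing K] (p n : ℕ) (e : Fin n → K) : K[X] :=
  X ^ p ^ n + ∑ j : Fin n, C (e j) * X ^ p ^ (j : ℕ)

lemma twPoly_eval {K : Type*} [CommRing K] (p n : ℕ) (e : Fin n → K) (x : K) :
    (twPoly p n e).eval x = x ^ p ^ n + ∑ j : Fin n, e j * x ^ p ^ (j : ℕ) := by
  simp [twPoly, eval_finset_sum]

lemma twPoly_lower_deg {K : Type*} [Field K] {p n : ℕ} (hp : 1 < p) (e : Fin n → K) (y : K) :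
    (∑ j : Fin n, C (e j) * X ^ p ^ (j : ℕ) - C y : K[X]).degree < ((p ^ n : ℕ) : WithBot ℕ) := by
  have hpn : (⊥ : WithBot ℕ) < ((p ^ n : ℕ) : WithBot ℕ) := WithBot.bot_lt_coe _
  refine lt_of_le_of_lt (degree_sub_le _ _) ?_
  rw [max_lt_iff]
  constructor
  · refine lt_of_le_of_lt (degree_sum_le _ _) ?_
    rw [Finset.sup_lt_iff hpn]
    intro j _
    refine lt_of_le_of_lt (degree_C_mul_X_pow_le _ _) ?_
    exact_mod_cast Nat.pow_lt_pow_right hp j.2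
  · refine lt_of_le_of_lt degree_C_le ?_
    exact_mod_cast Nat.pow_pos (n := n) (by omega)

lemma twPoly_sub_C_natDegree {K : Type*} [Field K] {p n : ℕ} (hp : 1 < p) (e : Fin n → K)
    (y : K) : (twPoly p n e - C y).natDegree = p ^ n := by
  have h := twPoly_lower_deg hp e y
  have : twPoly p n e - C y = X ^ p ^ n + (∑ j : Fin n, C (e j) * X ^ p ^ (j : ℕ) - C y) := by
    ring_nf; rw [twPoly]; ring
  rw [this]
  rw [natDegree_eq_of_degree_eq (degree_add_eq_left_of_degree_lt (by rwa [degree_X_pow]))]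
  exact natDegree_X_pow _

/-- surjectivity of the twisted additive map on an algebraically closed field -/
lemma twisted_field_surj {K : Type*} [Field K] [IsAlgClosed K] {p n : ℕ} (hp : 1 < p)
    (hn : 0 < n) (e : Fin n → K) (y : K) :
    ∃ x : K, x ^ p ^ n + ∑ j : Fin n, e j * x ^ p ^ (j : ℕ) = y := by
  have hdeg : (twPoly p n e - C y).degree ≠ 0 := by
    rw [degree_eq_natDegree (p := twPoly p n e - C y) ?hne, twPoly_sub_C_natDegree hp e y]
    · exact_mod_cast (Nat.pow_pos (n := n) (by omega)).ne'
    case hne =>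
      intro h0
      have := twPoly_sub_C_natDegree hp e y
      rw [h0] at this
      simp at this
      have := Nat.pow_pos (n := n) (show 0 < p by omega)
      omega
  obtain ⟨x, hx⟩ := IsAlgClosed.exists_root _ hdeg
  refine ⟨x, ?_⟩
  have := hx
  rw [IsRoot.def, eval_sub, eval_C, sub_eq_zero, twPoly_eval] at this
  exact this

/-- An element of a field of characteristic `p` satisfying `γ^p = γ` is in the prime field. -/
lemma eq_natCast_of_pow_card {K : Type*} [Field K] (p : ℕ) [Fact p.Prime] [CharP K p]
    {γ : K} (h : γ ^ p = γ) : ∃ c : ℕ, γ = (c : K) := by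
  classical
  have hp : 1 < p := (Fact.out : p.Prime).one_lt
  set φ := ZMod.castHom (dvd_refl p) K with hφ
  set Z : Finset K := insert γ (Finset.image φ Finset.univ) with hZ
  have hroots : Z.val ⊆ (X ^ p - X : K[X]).roots := by
    intro z hz
    rw [Polynomial.mem_roots (FiniteField.X_pow_card_sub_X_ne_zero K hp)]
    rw [Finset.mem_val, hZ, Finset.mem_insert] at hz
    rcases hz with rfl | hz
    · simp [IsRoot.def, h]
    · obtain ⟨a, _, rfl⟩ := Finset.mem_image.mp hz
      have : φ a ^ p = φ a := by rw [← map_pow, ZMod.pow_card]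
      simp [IsRoot.def, this]
  have hcard : Z.card ≤ p := by
    have := Polynomial.card_le_degree_of_subset_roots hroots
    rwa [FiniteField.X_pow_card_sub_X_natDegree_eq K hp] at this
  by_cases hmem : γ ∈ Finset.image φ Finset.univ
  · obtain ⟨a, _, rfl⟩ := Finset.mem_image.mp hmem
    refine ⟨a.val, ?_⟩
    rw [hφ, ZMod.castHom_apply, ← ZMod.natCast_val]
  · exfalso
    have h1 : Z.card = (Finset.image φ Finset.univ).card + 1 := by
      rw [hZ, Finset.card_insert_of_notMem hmem]
    have h2 : (Finset.image φ Finset.univ).card = p := by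
      rw [Finset.card_image_of_injective _ (ZMod.castHom_injective K), Finset.card_univ,
        ZMod.card]
    omega

theorem twisted_field_basis {K : Type*} [Field K] [IsAlgClosed K] (p : ℕ) [Fact p.Prime]
    [CharP K p] (n : ℕ) (hn : 0 < n) (e : Fin n → K) (he : e ⟨0, hn⟩ ≠ 0) :
    ∃ a : Fin n → K,
      (∀ i, a i ^ p ^ n + ∑ j : Fin n, e j * a i ^ p ^ (j : ℕ) = 0) ∧
      (∀ v : K, v ^ p ^ n + ∑ j : Fin n, e j * v ^ p ^ (j : ℕ) = 0 →
        ∃ c : Fin n → ℕ, v = ∑ i, (c i : K) * a i) ∧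
      (∀ c : Fin n → K, (∀ i, c i ^ p = c i) → ∑ i, c i * a i = 0 → ∀ i, c i = 0) := by
  classical
  have hp : 1 < p := (Fact.out : p.Prime).one_lt
  have hpn0 : 0 < p ^ n := Nat.pow_pos (n := n) (by omega)
  set P : K[X] := twPoly p n e with hP
  have hPdeg : P.natDegree = p ^ n := by
    have := twPoly_sub_C_natDegree hp e 0
    rwa [map_zero, sub_zero] at this
  have hPne : P ≠ 0 := by
    intro h0
    rw [h0, natDegree_zero] at hPdeg
    omega
  -- derivative
  have hderiv : derivative P = C (e ⟨0, hn⟩) := by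
    rw [hP, twPoly, map_add, derivative_X_pow, derivative_sum]
    have h1 : (C ((p ^ n : ℕ) : K) : K[X]) = 0 := by
      rw [Nat.cast_pow, CharP.cast_eq_zero K p, zero_pow (by omega), map_zero]
    rw [h1, zero_mul, zero_add]
    rw [Finset.sum_eq_single_of_mem ⟨0, hn⟩ (Finset.mem_univ _)]
    · simp
    · intro j _ hj
      have hj1 : 1 ≤ (j : ℕ) := by
        rcases Nat.eq_zero_or_pos (j : ℕ) with h | h
        · exact absurd (Fin.ext h : j = ⟨0, hn⟩) hj
        · exact h
      rw [derivative_C_mul, derivative_X_pow]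
      have : ((p ^ (j : ℕ) : ℕ) : K) = 0 := by
        rw [Nat.cast_pow, CharP.cast_eq_zero K p, zero_pow (by omega)]
      rw [this, map_zero, zero_mul, mul_zero]
  have hsep : P.Separable := by
    refine ⟨0, C (e ⟨0, hn⟩)⁻¹, ?_⟩
    rw [hderiv, zero_mul, zero_add, ← C_mul, inv_mul_cancel₀ he, C_1]
  have hsplits : (P.map (algebraMap K K)).Splits := IsAlgClosed.splits _
  have hcardroot : Fintype.card (P.rootSet K) = p ^ n := by
    rw [card_rootSet_eq_natDegree hsep hsplits, hPdeg]
  -- the submodule of roots over ZMod p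
  letI : Algebra (ZMod p) K := ZMod.algebra _ _
  have halgmap : (algebraMap (ZMod p) K) = ZMod.castHom (dvd_refl p) K :=
    Subsingleton.elim _ _
  have hamap_pow : ∀ c : ZMod p, ∀ k : ℕ,
      (algebraMap (ZMod p) K c) ^ p ^ k = algebraMap (ZMod p) K c := by
    intro c k
    rw [← map_pow, ZMod.pow_card_pow]
  set V : Submodule (ZMod p) K :=
    { carrier := {x | x ^ p ^ n + ∑ j : Fin n, e j * x ^ p ^ (j : ℕ) = 0}
      add_mem' := by
        intro x y hx hy
        simp only [Set.mem_setOf_eq] at hx hy ⊢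
        have hxy : ∀ k : ℕ, (x + y) ^ p ^ k = x ^ p ^ k + y ^ p ^ k := fun k =>
          add_pow_char_pow x y p k
        rw [hxy]
        calc x ^ p ^ n + y ^ p ^ n + ∑ j : Fin n, e j * (x + y) ^ p ^ (j : ℕ)
            = (x ^ p ^ n + ∑ j : Fin n, e j * x ^ p ^ (j : ℕ))
              + (y ^ p ^ n + ∑ j : Fin n, e j * y ^ p ^ (j : ℕ)) := by
              simp only [hxy, mul_add]
              rw [Finset.sum_add_distrib]; ring
          _ = 0 := by rw [hx, hy, add_zero]
      zero_mem' := by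
        simp only [Set.mem_setOf_eq]
        rw [zero_pow hpn0.ne']
        rw [Finset.sum_eq_zero (fun j _ => by
          rw [zero_pow (Nat.pow_pos (by omega : 0 < p)).ne', mul_zero]), add_zero]
      smul_mem' := by
        intro c x hx
        simp only [Set.mem_setOf_eq] at hx ⊢
        rw [Algebra.smul_def]
        set u := algebraMap (ZMod p) K c with hu
        have : ∀ k : ℕ, (u * x) ^ p ^ k = u * x ^ p ^ k := by
          intro k
          rw [mul_pow, hamap_pow]
        rw [this]
        calc u * x ^ p ^ n + ∑ j : Fin n, e j * (u * x) ^ p ^ (j : ℕ)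
            = u * (x ^ p ^ n + ∑ j : Fin n, e j * x ^ p ^ (j : ℕ)) := by
              rw [mul_add, Finset.mul_sum]
              congr 1
              refine Finset.sum_congr rfl fun j _ => ?_
              rw [this]; ring
          _ = 0 := by rw [hx, mul_zero] } with hV
  have hVroot : ∀ x : K, x ∈ V ↔ x ∈ P.rootSet K := by
    intro x
    rw [mem_rootSet]
    constructor
    · intro hx
      refine ⟨hPne, ?_⟩
      rw [aeval_def, ← eval_map, Algebra.algebraMap_self, Polynomial.map_id, hP, twPoly_eval]
      exact hx
    · rintro ⟨-, hx⟩
      rw [aeval_def, ← eval_map, Algebra.algebraMap_self, Polynomial.map_id, hP, twPoly_eval] at hx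
      exact hx
  letI : Fintype V := Fintype.ofEquiv (P.rootSet K)
    (Equiv.setCongr (by ext x; exact (hVroot x).symm))
  have hcardV : Fintype.card V = p ^ n := by
    rw [← hcardroot]
    exact Fintype.card_congr (Equiv.setCongr (by ext x; exact hVroot x))
  haveI : Finite V := Finite.of_fintype _
  haveI : Module.Finite (ZMod p) V := Module.Finite.of_finite
  have hrank : Module.finrank (ZMod p) V = n := by
    have hcf := Module.card_fintype (Module.finBasis (ZMod p) V)
    rw [ZMod.card, hcardV, Fintype.card_fin] at hcf
    exact Nat.pow_right_injective (by omega : 2 ≤ p) hcf.symm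
  set b : Module.Basis (Fin n) (ZMod p) V := Module.finBasisOfFinrankEq (ZMod p) V hrank with hb
  refine ⟨fun i => (b i : K), ?_, ?_, ?_⟩
  · intro i
    exact (b i).2
  · intro v hv
    set m : V := ⟨v, hv⟩ with hm
    have hrepr := b.sum_repr m
    refine ⟨fun i => (b.repr m i).val, ?_⟩
    have h1 : ((∑ i, b.repr m i • b i : V) : K) = v := by rw [hrepr]
    rw [← h1, Submodule.coe_sum]
    refine Finset.sum_congr rfl fun i _ => ?_
    rw [Submodule.coe_smul, Algebra.smul_def, halgmap, ZMod.castHom_apply, ← ZMod.natCast_val]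
  · intro c hc hsum i
    choose m hm using fun i => eq_natCast_of_pow_card p (hc i)
    set γ : Fin n → ZMod p := fun i => ((m i : ℕ) : ZMod p) with hγ
    have hcγ : ∀ i, c i = algebraMap (ZMod p) K (γ i) := by
      intro i
      rw [hγ, map_natCast, hm]
    have hz : (∑ i, γ i • b i : V) = 0 := by
      apply Subtype.ext
      rw [Submodule.coe_sum, Submodule.coe_zero, ← hsum]
      refine Finset.sum_congr rfl fun i _ => ?_
      rw [Submodule.coe_smul, Algebra.smul_def, ← hcγ]
    have hγ0 : ∀ i, γ i = 0 := by
      have hli := Fintype.linearIndependent_iff.mp b.linearIndependent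
      exact hli γ hz
    rw [hcγ i, hγ0 i, map_zero]

section RingSide

variable {R : Type*} [CommRing R]

/-- The twisted additive operator. -/
def Lop (σ : R ≃+* R) {n : ℕ} (d : Fin n → R) (z : R) : R :=
  (⇑σ)^[n] z + ∑ j : Fin n, d j * (⇑σ)^[(j : ℕ)] z

lemma iter_map_add (σ : R ≃+* R) (j : ℕ) (x y : R) :
    (⇑σ)^[j] (x + y) = (⇑σ)^[j] x + (⇑σ)^[j] y := by
  induction j with
  | zero => rfl
  | succ j ih => rw [Function.iterate_succ_apply', Function.iterate_succ_apply',
      Function.iterate_succ_apply', ih, map_add]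

lemma iter_map_mul (σ : R ≃+* R) (j : ℕ) (x y : R) :
    (⇑σ)^[j] (x * y) = (⇑σ)^[j] x * (⇑σ)^[j] y := by
  induction j with
  | zero => rfl
  | succ j ih => rw [Function.iterate_succ_apply', Function.iterate_succ_apply',
      Function.iterate_succ_apply', ih, map_mul]

lemma iter_map_natCast (σ : R ≃+* R) (j : ℕ) (c : ℕ) :
    (⇑σ)^[j] (c : R) = (c : R) := by
  induction j with
  | zero => rfl
  | succ j ih => rw [Function.iterate_succ_apply', ih, map_natCast]

lemma iter_map_zero (σ : R ≃+* R) (j : ℕ) : (⇑σ)^[j] (0 : R) = 0 := by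
  simpa using iter_map_natCast σ j 0

lemma iter_map_neg (σ : R ≃+* R) (j : ℕ) (x : R) : (⇑σ)^[j] (-x) = -(⇑σ)^[j] x := by
  have h := iter_map_add σ j x (-x)
  rw [add_neg_cancel, iter_map_zero] at h
  linear_combination -h

/-- `Lop` as an additive monoid hom. -/
def LopHom (σ : R ≃+* R) {n : ℕ} (d : Fin n → R) : R →+ R where
  toFun := Lop σ d
  map_zero' := by
    unfold Lop
    rw [iter_map_zero]
    simp [iter_map_zero]
  map_add' := by
    intro x y
    unfold Lop
    rw [iter_map_add]
    rw [Finset.sum_congr rfl fun j _ => by rw [iter_map_add σ (j : ℕ) x y, mul_add]]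
    rw [Finset.sum_add_distrib]
    ring

lemma Lop_add (σ : R ≃+* R) {n : ℕ} (d : Fin n → R) (x y : R) :
    Lop σ d (x + y) = Lop σ d x + Lop σ d y := (LopHom σ d).map_add x y

lemma Lop_sub (σ : R ≃+* R) {n : ℕ} (d : Fin n → R) (x y : R) :
    Lop σ d (x - y) = Lop σ d x - Lop σ d y := (LopHom σ d).map_sub x y

lemma Lop_zero (σ : R ≃+* R) {n : ℕ} (d : Fin n → R) : Lop σ d 0 = 0 :=
  (LopHom σ d).map_zero

lemma Lop_natCast_mul (σ : R ≃+* R) {n : ℕ} (d : Fin n → R) (c : ℕ) (x : R) :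
    Lop σ d ((c : R) * x) = (c : R) * Lop σ d x := by
  unfold Lop
  have h1 : ∀ j : ℕ, (⇑σ)^[j] ((c : R) * x) = (c : R) * (⇑σ)^[j] x := fun j => by
    rw [iter_map_mul, iter_map_natCast]
  have h2 : ∑ j : Fin n, d j * (⇑σ)^[(j : ℕ)] ((c : R) * x)
      = (c : R) * ∑ j : Fin n, d j * (⇑σ)^[(j : ℕ)] x := by
    rw [Finset.mul_sum]
    refine Finset.sum_congr rfl fun j _ => ?_
    rw [h1]; ring
  rw [h1, h2, mul_add]

lemma Lop_pPow_mul (σ : R ≃+* R) {n : ℕ} (d : Fin n → R) (p m : ℕ) (x : R) :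
    Lop σ d ((p : R) ^ m * x) = (p : R) ^ m * Lop σ d x := by
  have : ((p : R) ^ m) = ((p ^ m : ℕ) : R) := by push_cast; ring
  rw [this, Lop_natCast_mul]

end RingSide

section Adic

variable {R : Type*} [CommRing R] (p : ℕ)

lemma mem_pPow_iff (m : ℕ) (x : R) :
    x ∈ (Ideal.span {(p : R)}) ^ m ↔ ∃ t : R, x = (p : R) ^ m * t := by
  rw [Ideal.span_singleton_pow, Ideal.mem_span_singleton']
  constructor
  · rintro ⟨a, rfl⟩; exact ⟨a, (mul_comm _ _)⟩
  · rintro ⟨t, rfl⟩; exact ⟨t, (mul_comm _ _)⟩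

lemma pPow_mem_pow (m : ℕ) : (p : R) ^ m ∈ (Ideal.span {(p : R)}) ^ m :=
  Ideal.pow_mem_pow (Ideal.subset_span (Set.mem_singleton _)) m

lemma mul_mem_pPow_succ {m : ℕ} {x : R} (hx : x ∈ Ideal.span {(p : R)}) :
    (p : R) ^ m * x ∈ (Ideal.span {(p : R)}) ^ (m + 1) := by
  rw [pow_succ]
  exact Ideal.mul_mem_mul (pPow_mem_pow p m) hx

variable [IsAdicComplete (Ideal.span {(p : R)}) R]

lemma haus_zero {x : R} (hx : ∀ m, x ∈ (Ideal.span {(p : R)}) ^ m) : x = 0 := by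
  refine IsHausdorff.haus (inferInstance : IsHausdorff (Ideal.span {(p : R)}) R) x fun m => ?_
  rw [SModEq.zero, ← Ideal.one_eq_top, Ideal.smul_eq_mul, mul_one]
  exact hx m

lemma limit_of_cauchy (g : ℕ → R)
    (hg : ∀ m, g (m + 1) - g m ∈ (Ideal.span {(p : R)}) ^ (m + 1)) :
    ∃ x : R, ∀ m, x - g m ∈ (Ideal.span {(p : R)}) ^ m := by
  set I := Ideal.span {(p : R)} with hI
  have hcauchy : ∀ {m k : ℕ}, m ≤ k → g m ≡ g k [SMOD (I ^ m • ⊤ : Ideal R)] := by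
    intro m k hmk
    rw [← Ideal.one_eq_top, Ideal.smul_eq_mul, mul_one, SModEq.sub_mem]
    induction k with
    | zero =>
      have : m = 0 := by omega
      subst this; simp
    | succ k ih =>
      rcases Nat.lt_or_ge m (k+1) with h | h
      · have h1 : g m - g k ∈ I ^ m := ih (by omega)
        have h2 : g (k+1) - g k ∈ I ^ m := by
          refine Ideal.pow_le_pow_right (by omega) (hg k)
        have : g m - g (k+1) = (g m - g k) - (g (k+1) - g k) := by ring
        rw [this]
        exact sub_mem h1 h2
      · have : m = k + 1 := by omega
        subst this; simp
  obtain ⟨x, hx⟩ := IsPrecomplete.prec (inferInstance : IsPrecomplete I R) @hcauchy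
  refine ⟨x, fun m => ?_⟩
  have := hx m
  rw [← Ideal.one_eq_top, Ideal.smul_eq_mul, mul_one, SModEq.sub_mem] at this
  simpa using neg_mem this

end Adic

section Approx

variable {R : Type*} [CommRing R] (p : ℕ) [IsAdicComplete (Ideal.span {(p : R)}) R]
  (σ : R ≃+* R) {n : ℕ} (d : Fin n → R)

lemma twisted_approx
    (hsolve : ∀ u : R, ∃ t : R, Lop σ d t + u ∈ Ideal.span {(p : R)})
    (y z0 : R) (h : Lop σ d z0 - y ∈ Ideal.span {(p : R)}) :
    ∃ z : R, Lop σ d z = y ∧ z - z0 ∈ Ideal.span {(p : R)} := by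
  classical
  set I := Ideal.span {(p : R)} with hI
  have step : ∀ m : ℕ, ∀ z : R, Lop σ d z - y ∈ I ^ (m + 1) →
      ∃ z' : R, (z' - z ∈ I ^ (m + 1)) ∧ (Lop σ d z' - y ∈ I ^ (m + 2)) := by
    intro m z hz
    obtain ⟨u, hu⟩ := (mem_pPow_iff p (m + 1) _).mp hz
    obtain ⟨t, ht⟩ := hsolve u
    refine ⟨z + (p : R) ^ (m + 1) * t, ?_, ?_⟩
    · rw [add_sub_cancel_left]
      exact (mem_pPow_iff p (m + 1) _).mpr ⟨t, rfl⟩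
    · have : Lop σ d (z + (p : R) ^ (m + 1) * t) - y
          = (p : R) ^ (m + 1) * (Lop σ d t + u) := by
        rw [Lop_add, Lop_pPow_mul]
        rw [mul_add]
        have : Lop σ d z - y = (p:R)^(m+1) * u := hu
        linear_combination this
      rw [this]
      exact mul_mem_pPow_succ p ht
  -- the recursively defined sequence
  let G : ∀ m : ℕ, {z : R // Lop σ d z - y ∈ I ^ (m + 1)} :=
    fun m => Nat.rec (motive := fun m => {z : R // Lop σ d z - y ∈ I ^ (m + 1)})
      ⟨z0, by rw [pow_one]; exact h⟩
      (fun m zh => ⟨(step m zh.1 zh.2).choose, (step m zh.1 zh.2).choose_spec.2⟩) m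
  have hGsucc : ∀ m, (G (m + 1)).1 - (G m).1 ∈ I ^ (m + 1) := by
    intro m
    exact (step m (G m).1 (G m).2).choose_spec.1
  obtain ⟨x, hx⟩ := limit_of_cauchy p (fun m => (G m).1) hGsucc
  refine ⟨x, ?_, ?_⟩
  · apply sub_eq_zero.mp
    apply haus_zero p
    intro m
    have h1 : Lop σ d x - Lop σ d (G m).1 ∈ I ^ m := by
      obtain ⟨t, ht⟩ := (mem_pPow_iff p m _).mp (hx m)
      rw [← Lop_sub, ht, Lop_pPow_mul]
      exact (mem_pPow_iff p m _).mpr ⟨_, rfl⟩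
    have h2 : Lop σ d (G m).1 - y ∈ I ^ m :=
      Ideal.pow_le_pow_right (by omega) (G m).2
    have : Lop σ d x - y = (Lop σ d x - Lop σ d (G m).1) + (Lop σ d (G m).1 - y) := by ring
    rw [this]
    exact add_mem h1 h2
  · have h1 : x - (G 1).1 ∈ I ^ 1 := hx 1
    have h2 : (G 1).1 - (G 0).1 ∈ I ^ 1 := hGsucc 0
    have h0 : (G 0).1 = z0 := rfl
    have : x - z0 = (x - (G 1).1) + ((G 1).1 - (G 0).1) := by rw [h0]; ring
    rw [this]
    exact le_of_eq (pow_one I) (add_mem h1 h2)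

lemma twisted_surj
    (hsolve : ∀ u : R, ∃ t : R, Lop σ d t + u ∈ Ideal.span {(p : R)}) (y : R) :
    ∃ x : R, Lop σ d x = y := by
  obtain ⟨t, ht⟩ := hsolve (-y)
  obtain ⟨z, hz, -⟩ := twisted_approx p σ d hsolve y t (by rwa [sub_eq_add_neg])
  exact ⟨z, hz⟩

end Approx

section Struct

variable {R : Type*} [CommRing R] (p : ℕ) [IsAdicComplete (Ideal.span {(p : R)}) R]

/-- In our setting, every element outside `pR` is a unit. -/
lemma unit_of_not_mem (hmax : (Ideal.span {(p : R)}).IsMaximal)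
    {u : R} (hu : u ∉ Ideal.span {(p : R)}) : IsUnit u := by
  by_contra hnu
  obtain ⟨M, hM, huM⟩ := exists_max_ideal_of_mem_nonunits hnu
  have hle : Ideal.span {(p : R)} ≤ M := by
    intro x hx
    have hjac := IsAdicComplete.le_jacobson_bot (Ideal.span {(p : R)}) hx
    rw [Ideal.jacobson, Ideal.mem_sInf] at hjac
    exact hjac ⟨bot_le, hM⟩
  have := hmax.eq_of_le hM.ne_top hle
  rw [this] at hu
  exact hu huM

end Struct

section Ann

variable {R : Type*} [CommRing R] (p : ℕ) [IsAdicComplete (Ideal.span {(p : R)}) R]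

lemma struct_pPow_unit (hmax : (Ideal.span {(p : R)}).IsMaximal)
    {x : R} (hx : x ≠ 0) : ∃ (m : ℕ) (u : R), IsUnit u ∧ x = (p : R) ^ m * u := by
  classical
  have hexists : ∃ m : ℕ, x ∉ (Ideal.span {(p : R)}) ^ m := by
    by_contra hall
    push_neg at hall
    exact hx (haus_zero p hall)
  set m0 := Nat.find hexists with hm0
  have hm0pos : 0 < m0 := by
    rcases Nat.eq_zero_or_pos m0 with h | h
    · exfalso
      have := Nat.find_spec hexists
      rw [← hm0, h] at this
      exact this (by simp)
    · exact h
  have hmem : x ∈ (Ideal.span {(p : R)}) ^ (m0 - 1) := by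
    by_contra hne
    have hle : m0 ≤ m0 - 1 := Nat.find_le hne
    omega
  have hnot : x ∉ (Ideal.span {(p : R)}) ^ m0 := Nat.find_spec hexists
  obtain ⟨u, hu⟩ := (mem_pPow_iff p (m0 - 1) x).mp hmem
  refine ⟨m0 - 1, u, ?_, hu⟩
  refine unit_of_not_mem p hmax ?_
  intro huI
  apply hnot
  obtain ⟨v, hv⟩ := Ideal.mem_span_singleton'.mp huI
  have hxv : x = (p : R) ^ m0 * v := by
    have h1 : (p : R) ^ m0 = (p : R) ^ (m0 - 1) * (p : R) := by
      rw [← pow_succ]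
      congr 1
      omega
    rw [hu, ← hv, h1]
    ring
  exact (mem_pPow_iff p m0 x).mpr ⟨v, hxv⟩

lemma ann_mem_p (hmax : (Ideal.span {(p : R)}).IsMaximal)
    {m : ℕ} (hpm : (p : R) ^ m ≠ 0) {x : R} (hx : (p : R) ^ m * x = 0) :
    x ∈ Ideal.span {(p : R)} := by
  by_cases hx0 : x = 0
  · rw [hx0]; exact Ideal.zero_mem _
  obtain ⟨k, u, hu, rfl⟩ := struct_pPow_unit p hmax hx0
  have hpk : (p : R) ^ (m + k) = 0 := by
    have h1 : (p : R) ^ (m + k) * u = 0 := by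
      rw [pow_add]
      linear_combination hx
    obtain ⟨w, hw⟩ := hu.exists_right_inv
    calc (p : R) ^ (m + k) = (p : R) ^ (m + k) * (u * w) := by rw [hw, mul_one]
      _ = ((p : R) ^ (m + k) * u) * w := by ring
      _ = 0 := by rw [h1, zero_mul]
  have hk : k ≠ 0 := by
    intro h0
    rw [h0, Nat.add_zero] at hpk
    exact hpm hpk
  have hky : (p : R) ^ k * u = (p : R) * ((p : R) ^ (k - 1) * u) := by
    have h1 : (p : R) ^ k = (p : R) ^ (k - 1) * (p : R) := by
      rw [← pow_succ]; congr 1; omega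
    rw [h1]; ring
  rw [hky]
  exact Ideal.mul_mem_right _ _ (Ideal.subset_span (Set.mem_singleton _))

lemma ann_solve (σ : R ≃+* R) {n : ℕ} (d : Fin n → R)
    (hmax : (Ideal.span {(p : R)}).IsMaximal)
    (hsolve : ∀ u : R, ∃ t : R, Lop σ d t + u ∈ Ideal.span {(p : R)})
    {m : ℕ} (hpm : (p : R) ^ m ≠ 0) {y : R} (hy : (p : R) ^ m * y = 0) :
    ∃ s : R, (p : R) ^ m * s = 0 ∧ Lop σ d s = y := by
  by_cases hy0 : y = 0
  · exact ⟨0, by rw [mul_zero], by rw [Lop_zero, hy0]⟩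
  obtain ⟨k, u, hu, rfl⟩ := struct_pPow_unit p hmax hy0
  have hpk : (p : R) ^ (m + k) = 0 := by
    have h1 : (p : R) ^ (m + k) * u = 0 := by
      rw [pow_add]; linear_combination hy
    obtain ⟨w, hw⟩ := hu.exists_right_inv
    calc (p : R) ^ (m + k) = (p : R) ^ (m + k) * (u * w) := by rw [hw, mul_one]
      _ = ((p : R) ^ (m + k) * u) * w := by ring
      _ = 0 := by rw [h1, zero_mul]
  obtain ⟨s0, hs0⟩ := twisted_surj p σ d hsolve u
  refine ⟨(p : R) ^ k * s0, ?_, ?_⟩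
  · calc (p : R) ^ m * ((p : R) ^ k * s0) = (p : R) ^ (m + k) * s0 := by rw [pow_add]; ring
      _ = 0 := by rw [hpk, zero_mul]
  · rw [Lop_pPow_mul, hs0]

end Ann

section Span

variable {R : Type*} [CommRing R] (p : ℕ) [IsAdicComplete (Ideal.span {(p : R)}) R]
  (σ : R ≃+* R) {n : ℕ} (d : Fin n → R)

lemma Lop_sum_natCast (c : Fin n → ℕ) (z : Fin n → R) :
    Lop σ d (∑ i, (c i : R) * z i) = ∑ i, (c i : R) * Lop σ d (z i) := by
  rw [show Lop σ d (∑ i, (c i : R) * z i) = (LopHom σ d) (∑ i, (c i : R) * z i) from rfl,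
    map_sum]
  exact Finset.sum_congr rfl fun i _ => Lop_natCast_mul σ d (c i) (z i)

lemma limit_of_cauchy' (g : ℕ → R)
    (hg : ∀ m, g (m + 1) - g m ∈ (Ideal.span {(p : R)}) ^ m) :
    ∃ x : R, ∀ m, x - g m ∈ (Ideal.span {(p : R)}) ^ m := by
  set I := Ideal.span {(p : R)} with hI
  have hcauchy : ∀ {m k : ℕ}, m ≤ k → g m ≡ g k [SMOD (I ^ m • ⊤ : Ideal R)] := by
    intro m k hmk
    rw [← Ideal.one_eq_top, Ideal.smul_eq_mul, mul_one, SModEq.sub_mem]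
    induction k with
    | zero =>
      have : m = 0 := by omega
      subst this; simp
    | succ k ih =>
      rcases Nat.lt_or_ge m (k+1) with h | h
      · have h1 : g m - g k ∈ I ^ m := ih (by omega)
        have h2 : g (k+1) - g k ∈ I ^ m := by
          refine Ideal.pow_le_pow_right (by omega) (hg k)
        have : g m - g (k+1) = (g m - g k) - (g (k+1) - g k) := by ring
        rw [this]
        exact sub_mem h1 h2
      · have : m = k + 1 := by omega
        subst this; simp
  obtain ⟨x, hx⟩ := IsPrecomplete.prec (inferInstance : IsPrecomplete I R) @hcauchy
  refine ⟨x, fun m => ?_⟩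
  have := hx m
  rw [← Ideal.one_eq_top, Ideal.smul_eq_mul, mul_one, SModEq.sub_mem] at this
  simpa using neg_mem this

lemma span_step (hmax : (Ideal.span {(p : R)}).IsMaximal)
    (hsolve : ∀ u : R, ∃ t : R, Lop σ d t + u ∈ Ideal.span {(p : R)})
    (z : Fin n → R) (hz : ∀ i, Lop σ d (z i) = 0)
    (hspan : ∀ t : R, Lop σ d t = 0 →
      ∃ c : Fin n → ℕ, t - ∑ i, (c i : R) * z i ∈ Ideal.span {(p : R)})
    {m : ℕ} {w : R} (hw : Lop σ d w = 0) (hwm : w ∈ (Ideal.span {(p : R)}) ^ m) :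
    ∃ (c : Fin n → ℕ) (w' : R), Lop σ d w' = 0 ∧ w' ∈ (Ideal.span {(p : R)}) ^ (m + 1) ∧
      w = (p : R) ^ m * (∑ i, (c i : R) * z i) + w' := by
  obtain ⟨t, rfl⟩ := (mem_pPow_iff p m w).mp hwm
  by_cases hpm : (p : R) ^ m = 0
  · refine ⟨0, 0, Lop_zero σ d, Ideal.zero_mem _, ?_⟩
    rw [hpm]
    simp
  · have hLt : (p : R) ^ m * Lop σ d t = 0 := by
      rw [← Lop_pPow_mul]
      exact hw
    obtain ⟨s, hs0, hsL⟩ := ann_solve p σ d hmax hsolve hpm hLt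
    set t' := t - s with ht'
    have hLt' : Lop σ d t' = 0 := by
      rw [ht', Lop_sub, hsL, sub_self]
    have hpt' : (p : R) ^ m * t' = (p : R) ^ m * t := by
      rw [ht', mul_sub, hs0, sub_zero]
    obtain ⟨c, hc⟩ := hspan t' hLt'
    refine ⟨c, (p : R) ^ m * (t' - ∑ i, (c i : R) * z i), ?_, ?_, ?_⟩
    · rw [Lop_pPow_mul, Lop_sub, hLt', Lop_sum_natCast]
      rw [Finset.sum_congr rfl fun i _ => by rw [hz i, mul_zero]]
      simp
    · exact mul_mem_pPow_succ p hc
    · rw [← hpt']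
      ring

end Span

section SpanFull

variable {R : Type*} [CommRing R] (p : ℕ) [IsAdicComplete (Ideal.span {(p : R)}) R]
  (σ : R ≃+* R) {n : ℕ} (d : Fin n → R)

omit [IsAdicComplete (Ideal.span {(p : R)}) R] in
lemma sigma_fix_pPow_mem {x : R} {m : ℕ} (hx : x ∈ (Ideal.span {(p : R)}) ^ m) :
    σ x ∈ (Ideal.span {(p : R)}) ^ m := by
  obtain ⟨t, rfl⟩ := (mem_pPow_iff p m x).mp hx
  refine (mem_pPow_iff p m _).mpr ⟨σ t, ?_⟩
  rw [map_mul, map_pow, map_natCast]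

variable (hmax : (Ideal.span {(p : R)}).IsMaximal)
  (hsolve : ∀ u : R, ∃ t : R, Lop σ d t + u ∈ Ideal.span {(p : R)})
  (z : Fin n → R) (hz : ∀ i, Lop σ d (z i) = 0)
  (hspan : ∀ t : R, Lop σ d t = 0 →
    ∃ c : Fin n → ℕ, t - ∑ i, (c i : R) * z i ∈ Ideal.span {(p : R)})

omit [IsAdicComplete (Ideal.span {(p : R)}) R] in
lemma span_invariant_algebra (z : Fin n → R) (w : R) (a c : Fin n → ℕ) (q2 w' : R) (m : ℕ)
    (hold : w = ∑ i, ((a i : ℕ) : R) * z i + q2)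
    (heq : q2 = (p : R) ^ m * (∑ i, ((c i : ℕ) : R) * z i) + w') :
    w = ∑ i, (((a i + p ^ m * c i : ℕ) : ℕ) : R) * z i + w' := by
  have hper : ∀ i : Fin n, (((a i + p ^ m * c i : ℕ) : ℕ) : R) * z i
      = ((a i : ℕ) : R) * z i + (p : R) ^ m * (((c i : ℕ) : R) * z i) := by
    intro i
    push_cast
    ring
  rw [hold, heq]
  simp only [hper]
  rw [Finset.sum_add_distrib, Finset.mul_sum]
  ring

/-- A choice function for the span step. -/
noncomputable def spanStepC {m : ℕ} {w : R} (hw : Lop σ d w = 0)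
    (hwm : w ∈ (Ideal.span {(p : R)}) ^ m) : (Fin n → ℕ) × R :=
  ⟨(span_step p σ d hmax hsolve z hz hspan hw hwm).choose,
   (span_step p σ d hmax hsolve z hz hspan hw hwm).choose_spec.choose⟩

lemma spanStepC_spec {m : ℕ} {w : R} (hw : Lop σ d w = 0)
    (hwm : w ∈ (Ideal.span {(p : R)}) ^ m) :
    Lop σ d (spanStepC p σ d hmax hsolve z hz hspan hw hwm).2 = 0 ∧
    (spanStepC p σ d hmax hsolve z hz hspan hw hwm).2 ∈ (Ideal.span {(p : R)}) ^ (m + 1) ∧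
    w = (p : R) ^ m * (∑ i, ((spanStepC p σ d hmax hsolve z hz hspan hw hwm).1 i : R) * z i)
      + (spanStepC p σ d hmax hsolve z hz hspan hw hwm).2 :=
  (span_step p σ d hmax hsolve z hz hspan hw hwm).choose_spec.choose_spec

/-- The successive approximations of a solution by linear combinations. -/
noncomputable def spanStateAux (w : R) (hw : Lop σ d w = 0) :
    ∀ m : ℕ, {q : (Fin n → ℕ) × R // Lop σ d q.2 = 0 ∧
      q.2 ∈ (Ideal.span {(p : R)}) ^ m ∧ w = ∑ i, ((q.1 i : ℕ) : R) * z i + q.2} :=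
  Nat.rec
    ⟨(fun _ => 0, w), hw, by simp, by simp⟩
    (fun m q =>
      ⟨(fun i => q.1.1 i + p ^ m *
          (spanStepC p σ d hmax hsolve z hz hspan q.2.1 q.2.2.1).1 i,
        (spanStepC p σ d hmax hsolve z hz hspan q.2.1 q.2.2.1).2),
       (spanStepC_spec p σ d hmax hsolve z hz hspan q.2.1 q.2.2.1).1,
       (spanStepC_spec p σ d hmax hsolve z hz hspan q.2.1 q.2.2.1).2.1,
       span_invariant_algebra p z w q.1.1 _ _ _ m q.2.2.2
         (spanStepC_spec p σ d hmax hsolve z hz hspan q.2.1 q.2.2.1).2.2⟩)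

lemma spanStateAux_compat (w : R) (hw : Lop σ d w = 0) (m : ℕ) :
    ∃ c : Fin n → ℕ, ∀ i,
      (spanStateAux p σ d hmax hsolve z hz hspan w hw (m + 1)).1.1 i
        = (spanStateAux p σ d hmax hsolve z hz hspan w hw m).1.1 i + p ^ m * c i :=
  ⟨_, fun _ => rfl⟩

include p hmax hsolve hz hspan in
lemma span_full {w : R} (hw : Lop σ d w = 0) :
    ∃ γ : Fin n → R, (∀ i, σ (γ i) = γ i) ∧ w = ∑ i, γ i * z i := by
  classical
  set I := Ideal.span {(p : R)} with hI
  set D := spanStateAux p σ d hmax hsolve z hz hspan w hw with hD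
  have hdiff : ∀ i m, (((D (m+1)).1.1 i : ℕ) : R) - (((D m).1.1 i : ℕ) : R) ∈ I ^ m := by
    intro i m
    obtain ⟨c, hc⟩ := spanStateAux_compat p σ d hmax hsolve z hz hspan w hw m
    rw [hc i]
    push_cast
    rw [add_sub_cancel_left]
    exact (mem_pPow_iff p m _).mpr ⟨_, rfl⟩
  have hlim : ∀ i : Fin n, ∃ x : R, ∀ m, x - (((D m).1.1 i : ℕ) : R) ∈ I ^ m :=
    fun i => limit_of_cauchy' p _ (hdiff i)
  choose γ hγ using hlim
  have hfixed : ∀ i, σ (γ i) = γ i := by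
    intro i
    rw [← sub_eq_zero]
    apply haus_zero p
    intro m
    have h1 : σ (γ i) - (((D m).1.1 i : ℕ) : R) ∈ I ^ m := by
      have := sigma_fix_pPow_mem p σ (hγ i m)
      rwa [map_sub, map_natCast] at this
    have heq : σ (γ i) - γ i = (σ (γ i) - (((D m).1.1 i : ℕ) : R))
        - (γ i - (((D m).1.1 i : ℕ) : R)) := by ring
    rw [heq]
    exact sub_mem h1 (hγ i m)
  refine ⟨γ, hfixed, ?_⟩
  rw [← sub_eq_zero]
  apply haus_zero p
  intro m
  have hDm := (D m).2.2.2
  have h1 : ∑ i, γ i * z i - ∑ i, (((D m).1.1 i : ℕ) : R) * z i ∈ I ^ m := by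
    rw [← Finset.sum_sub_distrib]
    refine Submodule.sum_mem _ fun i _ => ?_
    rw [← sub_mul]
    exact Ideal.mul_mem_right _ _ (hγ i m)
  have h2 : (D m).1.2 ∈ I ^ m := (D m).2.2.1
  have heq : w - ∑ i, γ i * z i =
      (D m).1.2 - (∑ i, γ i * z i - ∑ i, (((D m).1.1 i : ℕ) : R) * z i) := by
    linear_combination hDm
  rw [heq]
  exact sub_mem h2 h1

end SpanFull

section Indep

variable {R : Type*} [CommRing R] (p : ℕ) [IsAdicComplete (Ideal.span {(p : R)}) R]
  (σ : R ≃+* R) {n : ℕ}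

lemma indep_full (hmax : (Ideal.span {(p : R)}).IsMaximal) (z : Fin n → R)
    (hind : ∀ t : Fin n → R, (∀ i, σ (t i) - t i ∈ Ideal.span {(p : R)}) →
      (∑ i, t i * z i ∈ Ideal.span {(p : R)}) → ∀ i, t i ∈ Ideal.span {(p : R)})
    (δ : Fin n → R) (hfix : ∀ i, σ (δ i) = δ i) (hsum : ∑ i, δ i * z i = 0) :
    ∀ i, δ i = 0 := by
  set I := Ideal.span {(p : R)} with hI
  have main : ∀ m : ℕ, ∀ i, δ i ∈ I ^ m := by
    intro m
    induction m with
    | zero => intro i; rw [pow_zero, Ideal.one_eq_top]; exact Submodule.mem_top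
    | succ m ih =>
      have hch : ∀ i, ∃ t, δ i = (p : R) ^ m * t := fun i => (mem_pPow_iff p m _).mp (ih i)
      choose t ht using hch
      by_cases hpm : (p : R) ^ m = 0
      · intro i
        rw [ht i, hpm, zero_mul]
        exact Ideal.zero_mem _
      · have htfix : ∀ i, σ (t i) - t i ∈ I := by
          intro i
          refine ann_mem_p p hmax hpm ?_
          have h1 : σ (δ i) = (p : R) ^ m * σ (t i) := by
            rw [ht i, map_mul, map_pow, map_natCast]
          have h2 : σ (δ i) = δ i := hfix i
          rw [mul_sub]
          rw [← h1, h2, ht i]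
          ring
        have htsum : ∑ i, t i * z i ∈ I := by
          refine ann_mem_p p hmax hpm ?_
          rw [Finset.mul_sum]
          rw [Finset.sum_congr rfl fun i _ => by rw [← mul_assoc, ← ht i]]
          exact hsum
        have := hind t htfix htsum
        intro i
        obtain ⟨s, hs⟩ := Ideal.mem_span_singleton'.mp (this i)
        rw [ht i, ← hs]
        have : (p : R) ^ m * (s * (p : R)) = (p : R) ^ m * (p : R) * s := by ring
        rw [this, ← pow_succ]
        exact (mem_pPow_iff p (m+1) _).mpr ⟨s, rfl⟩
  intro i
  apply haus_zero p
  intro m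
  exact main m i

end Indep

/-- Hensel's lemma for `σ`-twisted additive polynomials: let `R` be a `p`-adically
complete and separated ring whose residue ring `R/pR` is an algebraically closed field,
and let `σ` be an automorphism of `R` lifting the Frobenius `x ↦ x^p`.  Given
`d_0, ..., d_{n-1} ∈ R` with `d_0` not divisible by `p`, the solutions in `R` of
`z^{σ^n} + d_{n-1} z^{σ^{n-1}} + ⋯ + d_0 z = 0` form a free module of rank `n` over the
fixed ring `R_0 = {r ∈ R : σ r = r}`: there are `n` solutions `z_1, …, z_n` such that
every solution is uniquely an `R_0`-linear combination of them. -/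
theorem twisted_hensel_free_rank {R : Type*} [CommRing R] (p : ℕ) [Fact (Nat.Prime p)]
    [IsAdicComplete (Ideal.span {(p : R)}) R]
    (hfield : IsField (R ⧸ Ideal.span {(p : R)}))
    (halg : letI := hfield.toField; IsAlgClosed (R ⧸ Ideal.span {(p : R)}))
    (σ : R ≃+* R)
    (hσ : ∀ x : R, Ideal.Quotient.mk (Ideal.span {(p : R)}) (σ x) =
      Ideal.Quotient.mk (Ideal.span {(p : R)}) (x ^ p))
    (n : ℕ) (hn : 0 < n) (d : Fin n → R)
    (hd0 : d ⟨0, hn⟩ ∉ Ideal.span {(p : R)}) :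
    ∃ z : Fin n → R,
      (∀ i, (⇑σ)^[n] (z i) + ∑ j : Fin n, d j * (⇑σ)^[(j : ℕ)] (z i) = 0) ∧
      ∀ w : R, (⇑σ)^[n] w + ∑ j : Fin n, d j * (⇑σ)^[(j : ℕ)] w = 0 →
        ∃! c : Fin n → (RingHom.eqLocus (σ : R →+* R) (RingHom.id R)),
          w = ∑ i, (c i : R) * z i := by
  classical
  set I := Ideal.span {(p : R)} with hI
  letI : Field (R ⧸ I) := hfield.toField
  haveI : IsAlgClosed (R ⧸ I) := halg
  have hpprime : p.Prime := Fact.out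
  have hp1 : 1 < p := hpprime.one_lt
  set π : R →+* (R ⧸ I) := Ideal.Quotient.mk I with hπ
  have hker : ∀ x : R, π x = 0 ↔ x ∈ I := fun x => Ideal.Quotient.eq_zero_iff_mem
  have hmax : I.IsMaximal := Ideal.Quotient.maximal_of_isField I hfield
  haveI : CharP (R ⧸ I) p := by
    refine (CharP.charP_iff_prime_eq_zero hpprime).mpr ?_
    have : ((p : ℕ) : R ⧸ I) = π ((p : ℕ) : R) := by rw [map_natCast]
    rw [this, hker]
    exact Ideal.subset_span (Set.mem_singleton _)
  have hσ' : ∀ x : R, π (σ x) = (π x) ^ p := by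
    intro x
    rw [hσ x, map_pow]
  have hσiter : ∀ (j : ℕ) (x : R), π ((⇑σ)^[j] x) = (π x) ^ p ^ j := by
    intro j
    induction j with
    | zero => intro x; simp
    | succ j ih =>
      intro x
      rw [Function.iterate_succ_apply', hσ' _, ih x, ← pow_mul, ← pow_succ]
  have hLop : ∀ x : R, π (Lop σ d x) =
      (π x) ^ p ^ n + ∑ j : Fin n, π (d j) * (π x) ^ p ^ (j : ℕ) := by
    intro x
    rw [Lop, map_add, map_sum, hσiter n x]
    congr 1
    refine Finset.sum_congr rfl fun j _ => ?_
    rw [map_mul, hσiter (j : ℕ) x]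
  set e : Fin n → (R ⧸ I) := fun j => π (d j) with he_def
  have he : e ⟨0, hn⟩ ≠ 0 := by
    intro h0
    exact hd0 ((hker _).mp h0)
  obtain ⟨a, ha_root, ha_span, ha_indep⟩ := twisted_field_basis p n hn e he
  have hsolve : ∀ u : R, ∃ t : R, Lop σ d t + u ∈ I := by
    intro u
    obtain ⟨x, hx⟩ := twisted_field_surj hp1 hn e (-(π u))
    obtain ⟨t, ht⟩ := Ideal.Quotient.mk_surjective x
    refine ⟨t, (hker _).mp ?_⟩
    rw [map_add, hLop t]
    rw [show π t = x from ht, hx]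
    ring
  have hzexists : ∀ i : Fin n, ∃ zi : R, Lop σ d zi = 0 ∧ π zi = a i := by
    intro i
    obtain ⟨t0, ht0⟩ := Ideal.Quotient.mk_surjective (a i)
    have hroot : Lop σ d t0 - 0 ∈ I := by
      rw [sub_zero, ← hker, hLop t0, show π t0 = a i from ht0]
      exact ha_root i
    obtain ⟨zi, hz1, hz2⟩ := twisted_approx p σ d hsolve 0 t0 hroot
    refine ⟨zi, hz1, ?_⟩
    have : π (zi - t0) = 0 := (hker _).mpr hz2
    rw [map_sub, sub_eq_zero] at this
    rw [this, ht0]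
  choose z hz1 hz2 using hzexists
  have hspan : ∀ t : R, Lop σ d t = 0 →
      ∃ c : Fin n → ℕ, t - ∑ i, (c i : R) * z i ∈ I := by
    intro t ht
    have hroot : (π t) ^ p ^ n + ∑ j : Fin n, e j * (π t) ^ p ^ (j : ℕ) = 0 := by
      rw [← hLop t, ht, map_zero]
    obtain ⟨c, hc⟩ := ha_span (π t) hroot
    refine ⟨c, (hker _).mp ?_⟩
    rw [map_sub, map_sum]
    rw [Finset.sum_congr rfl fun i _ => by rw [map_mul, map_natCast, hz2 i]]
    rw [← hc, sub_self]
  have hind : ∀ t : Fin n → R, (∀ i, σ (t i) - t i ∈ I) →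
      (∑ i, t i * z i ∈ I) → ∀ i, t i ∈ I := by
    intro t htfix htsum i
    have hγp : ∀ i, (π (t i)) ^ p = π (t i) := by
      intro i
      have : π (σ (t i) - t i) = 0 := (hker _).mpr (htfix i)
      rw [map_sub, sub_eq_zero, hσ' (t i)] at this
      exact this
    have hγsum : ∑ i, π (t i) * a i = 0 := by
      have : π (∑ i, t i * z i) = 0 := (hker _).mpr htsum
      rw [map_sum] at this
      rw [← this]
      exact Finset.sum_congr rfl fun i _ => by rw [map_mul, hz2 i]
    have := ha_indep (fun i => π (t i)) hγp hγsum i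
    exact (hker _).mp this
  refine ⟨z, fun i => ?_, fun w hw => ?_⟩
  · have := hz1 i
    rwa [Lop] at this
  · have hw' : Lop σ d w = 0 := by rwa [Lop]
    obtain ⟨γ, hγfix, hγeq⟩ := span_full p σ d hmax hsolve z hz1 hspan hw'
    refine ⟨fun i => ⟨γ i, hγfix i⟩, hγeq, ?_⟩
    intro c' hc'
    funext i
    apply Subtype.ext
    have hδfix : ∀ i, σ ((c' i : R) - γ i) = (c' i : R) - γ i := by
      intro i
      rw [map_sub, hγfix i]
      congr 1
      exact (c' i).2
    have hδsum : ∑ i, ((c' i : R) - γ i) * z i = 0 := by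
      rw [Finset.sum_congr rfl fun i _ => (sub_mul ((c' i : R)) (γ i) (z i))]
      rw [Finset.sum_sub_distrib, ← hc', ← hγeq, sub_self]
    have := indep_full p σ hmax z hind (fun i => (c' i : R) - γ i) hδfix hδsum i
    have h0 : (c' i : R) = γ i := by
      have := sub_eq_zero.mp this
      exact this
    exact h0
end

section
/- Let R be a p-adically complete ring with Frobenius lift σ and fixed ring R_0, and let z_1, ..., z_k ∈ R reduce modulo p to elements linearly independent over F_p. If sequences (c_n) and (c'_n) in R each have the form c_n = Σ_i λ_i^{σ^{-n}} z_i (for fixed z_i's and varying λ_i ∈ R), then the termwise sum (c_n + c'_n) and termwise product (c_n c'_n) satisfy twist-recurrence relations d_0 c_n + d_1 c_{n+1}^σ + ... + d_k c_{n+k}^{σ^k} = 0 with d_0, d_k units, depending only on the original recurrence relations and not on the particular sequences. -/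
section TwistAux

variable {R : Type*} [CommRing R] (p : ℕ) [Fact (Nat.Prime p)]

/-- In a `p`-adically complete ring with `R/p` a field, anything outside `(p)` is a unit. -/
lemma twist_aux_isUnit [IsAdicComplete (Ideal.span {(p : R)}) R]
    (hfield : IsField (R ⧸ Ideal.span {(p : R)}))
    {x : R} (hx : x ∉ Ideal.span {(p : R)}) : IsUnit x := by
  set I := Ideal.span {(p : R)} with hI
  have hx0 : Ideal.Quotient.mk I x ≠ 0 := by
    simpa [Ideal.Quotient.eq_zero_iff_mem] using hx
  obtain ⟨y, hy⟩ := hfield.mul_inv_cancel hx0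
  obtain ⟨w, rfl⟩ := Ideal.Quotient.mk_surjective y
  have hmem : x * w - 1 ∈ I := by
    rw [← Ideal.Quotient.eq_zero_iff_mem]
    rw [map_sub, map_mul, map_one, hy, sub_self]
  have hjac : I ≤ (⊥ : Ideal R).jacobson := IsAdicComplete.le_jacobson_bot I
  have hunit : IsUnit (x * w) := by
    have := (Ideal.mem_jacobson_bot.mp (hjac hmem)) 1
    simpa using this
  exact isUnit_of_mul_isUnit_left hunit

/-- In a `p`-adically separated/complete ring with `R/p` a field, every nonzero element
is `p^v` times a unit. -/
lemma twist_aux_decomp [IsAdicComplete (Ideal.span {(p : R)}) R]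
    (hfield : IsField (R ⧸ Ideal.span {(p : R)}))
    {x : R} (hx : x ≠ 0) : ∃ (v : ℕ) (y : R), IsUnit y ∧ x = (p : R) ^ v * y := by
  have hh : IsHausdorff (Ideal.span {(p : R)}) R := inferInstance
  have hex : ∃ n, x ∉ (Ideal.span {(p : R)}) ^ n := by
    by_contra h
    push_neg at h
    refine hx (hh.haus x fun n => ?_)
    rw [SModEq.zero]
    simpa using h n
  classical
  have hn₀spec : x ∉ (Ideal.span {(p : R)}) ^ (Nat.find hex) := Nat.find_spec hex
  have hn₀pos : Nat.find hex ≠ 0 := by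
    intro h
    apply hn₀spec
    rw [h, pow_zero, Ideal.one_eq_top]
    exact Submodule.mem_top
  obtain ⟨v, hv⟩ := Nat.exists_eq_succ_of_ne_zero hn₀pos
  have hxv : x ∈ (Ideal.span {(p : R)}) ^ v := by
    by_contra h
    exact absurd (Nat.find_min hex (hv ▸ Nat.lt_succ_self v)) (by simpa using h)
  rw [Ideal.span_singleton_pow, Ideal.mem_span_singleton] at hxv
  obtain ⟨y, hy⟩ := hxv
  refine ⟨v, y, ?_, hy⟩
  apply twist_aux_isUnit p hfield
  intro hmem
  apply hn₀spec
  rw [hv, Ideal.span_singleton_pow]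
  rw [Ideal.mem_span_singleton] at hmem ⊢
  obtain ⟨c, hc⟩ := hmem
  exact ⟨c, by rw [hy, hc, pow_succ]; ring⟩

variable (σ : R ≃+* R)

/-- The twisted "additive operator" `x ↦ ∑_{j ≤ K} d j • σ^j(x)`. -/
def twistOp (d : ℕ → R) (K : ℕ) (x : R) : R :=
  ∑ j ∈ Finset.range (K + 1), d j * (⇑σ)^[j] x

lemma twist_iterate_sum {ι : Type*} (j : ℕ) (s : Finset ι) (f : ι → R) :
    (⇑σ)^[j] (∑ i ∈ s, f i) = ∑ i ∈ s, (⇑σ)^[j] (f i) := by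
  induction j with
  | zero => simp
  | succ j ih => simp [Function.iterate_succ_apply', ih, map_sum]

lemma twistOp_sum {ι : Type*} (d : ℕ → R) (K : ℕ) (s : Finset ι) (f : ι → R) :
    twistOp σ d K (∑ i ∈ s, f i) = ∑ i ∈ s, twistOp σ d K (f i) := by
  unfold twistOp
  rw [Finset.sum_comm]
  refine Finset.sum_congr rfl fun j _ => ?_
  rw [twist_iterate_sum, Finset.mul_sum]

/-- shift of the coefficients -/
def twistShift (d : ℕ → R) : ℕ → R
  | 0 => 0
  | (j + 1) => d j

/-- One composition step: compose on the left with `x ↦ σ(y)·x - y·σ(x)`. -/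
lemma twist_compose_step (d : ℕ → R) (K : ℕ) (hsup : ∀ j, K < j → d j = 0) (y : R) :
    ∃ d' : ℕ → R,
      d' 0 = σ y * d 0 ∧
      d' (K + 1) = -(y * σ (d K)) ∧
      (∀ j, K + 1 < j → d' j = 0) ∧
      ∀ x, twistOp σ d' (K + 1) x = σ y * twistOp σ d K x - y * σ (twistOp σ d K x) := by
  refine ⟨fun j => σ y * d j - y * σ (twistShift d j), ?_, ?_, ?_, ?_⟩
  · simp [twistShift]
  · have : d (K + 1) = 0 := hsup _ (Nat.lt_succ_self K)
    simp [twistShift, this]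
  · intro j hj
    match j, hj with
    | (j + 1), hj =>
      have h1 : d (j + 1) = 0 := hsup _ (by omega)
      have h2 : d j = 0 := hsup _ (by omega)
      simp [twistShift, h1, h2]
  · intro x
    unfold twistOp
    have hsplit : ∑ j ∈ Finset.range (K + 2),
        (σ y * d j - y * σ (twistShift d j)) * (⇑σ)^[j] x
        = σ y * ∑ j ∈ Finset.range (K + 2), d j * (⇑σ)^[j] x
          - y * ∑ j ∈ Finset.range (K + 2), σ (twistShift d j) * (⇑σ)^[j] x := by
      rw [Finset.mul_sum, Finset.mul_sum, ← Finset.sum_sub_distrib]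
      refine Finset.sum_congr rfl fun j _ => by ring
    rw [show K + 1 + 1 = K + 2 from rfl, hsplit]
    congr 1
    · congr 1
      rw [Finset.sum_range_succ, hsup (K + 1) (Nat.lt_succ_self K), zero_mul, add_zero]
    · congr 1
      rw [Finset.sum_range_succ' (fun j => σ (twistShift d j) * (⇑σ)^[j] x) (K + 1)]
      simp only [twistShift, map_zero, zero_mul, add_zero]
      rw [map_sum]
      refine Finset.sum_congr rfl fun j _ => ?_
      rw [map_mul, Function.iterate_succ_apply']

/-- For any finite list of elements of `R` there is a twist-recurrence with unit first and
last coefficients killing all of them. -/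
lemma twist_exists_rel [IsAdicComplete (Ideal.span {(p : R)}) R]
    (hfield : IsField (R ⧸ Ideal.span {(p : R)}))
    (w : List R) :
    ∃ (K : ℕ) (d : ℕ → R), IsUnit (d 0) ∧ IsUnit (d K) ∧ (∀ j, K < j → d j = 0) ∧
      ∀ x ∈ w, twistOp σ d K x = 0 := by
  induction w with
  | nil =>
    refine ⟨0, fun j => if j = 0 then 1 else 0, by simp, by simp,
      fun j hj => if_neg (by omega), by simp⟩
  | cons a w ih =>
    obtain ⟨K, d, h0, hK, hsup, hkill⟩ := ih
    by_cases ha : twistOp σ d K a = 0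
    · refine ⟨K, d, h0, hK, hsup, ?_⟩
      intro x hx
      rcases List.mem_cons.mp hx with rfl | hx
      · exact ha
      · exact hkill x hx
    · obtain ⟨v, y, hyu, hy⟩ := twist_aux_decomp p hfield ha
      obtain ⟨d', h'0, h'K, h'sup, h'app⟩ := twist_compose_step σ d K hsup y
      refine ⟨K + 1, d', ?_, ?_, h'sup, ?_⟩
      · rw [h'0]; exact (hyu.map σ).mul h0
      · rw [h'K]; exact (hyu.mul (hK.map σ)).neg
      · intro x hx
        rcases List.mem_cons.mp hx with rfl | hx
        · rw [h'app, hy]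
          have hσp : σ ((p : R) ^ v * y) = (p : R) ^ v * σ y := by
            rw [map_mul, map_pow, map_natCast]
          rw [hσp]; ring
        · rw [h'app, hkill x hx]; simp

/-- Padding: a relation of length `K` can be extended to any length `K' ≥ K`. -/
lemma twist_pad (K : ℕ) (d : ℕ → R) (h0 : IsUnit (d 0)) (hK : IsUnit (d K))
    (hsup : ∀ j, K < j → d j = 0) (S : List R) (hkill : ∀ x ∈ S, twistOp σ d K x = 0) :
    ∀ K', K ≤ K' → ∃ d' : ℕ → R, IsUnit (d' 0) ∧ IsUnit (d' K') ∧
      (∀ j, K' < j → d' j = 0) ∧ ∀ x ∈ S, twistOp σ d' K' x = 0 := by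
  intro K' hKK'
  induction K', hKK' using Nat.le_induction with
  | base => exact ⟨d, h0, hK, hsup, hkill⟩
  | succ K' hKK' ih =>
    obtain ⟨e, h0, hK, hsup, hkill⟩ := ih
    obtain ⟨e', h'0, h'K, h'sup, h'app⟩ := twist_compose_step σ e K' hsup 1
    refine ⟨e', ?_, ?_, h'sup, ?_⟩
    · rw [h'0, map_one, one_mul]; exact h0
    · rw [h'K]; exact ((isUnit_one.mul (hK.map σ))).neg
    · intro x hx
      rw [h'app, hkill x hx]
      simp

lemma twist_key (n j : ℕ) (L zz : R) :
    (⇑σ)^[j] ((⇑σ.symm)^[n + j] L * zz) = (⇑σ.symm)^[n] L * (⇑σ)^[j] zz := by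
  rw [iterate_map_mul]
  congr 1
  rw [add_comm, Function.iterate_add_apply]
  exact Function.LeftInverse.iterate σ.apply_symm_apply j _

lemma twist_recur (d : ℕ → R) (K : ℕ) {m : Type*} [Fintype m] (w : m → R)
    (hw : ∀ i, twistOp σ d K (w i) = 0) (c : m → R) (n : ℕ) :
    ∑ j ∈ Finset.range (K + 1), d j * (⇑σ)^[j] (∑ i, (⇑σ.symm)^[n + j] (c i) * w i) = 0 := by
  have h1 : ∀ j, (⇑σ)^[j] (∑ i, (⇑σ.symm)^[n + j] (c i) * w i)
      = ∑ i, (⇑σ.symm)^[n] (c i) * (⇑σ)^[j] (w i) := by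
    intro j
    rw [twist_iterate_sum]
    exact Finset.sum_congr rfl fun i _ => twist_key σ n j _ _
  calc ∑ j ∈ Finset.range (K + 1), d j * (⇑σ)^[j] (∑ i, (⇑σ.symm)^[n + j] (c i) * w i)
      = ∑ j ∈ Finset.range (K + 1), ∑ i, (⇑σ.symm)^[n] (c i) * (d j * (⇑σ)^[j] (w i)) := by
        refine Finset.sum_congr rfl fun j _ => ?_
        rw [h1 j, Finset.mul_sum]
        exact Finset.sum_congr rfl fun i _ => by ring
    _ = ∑ i, (⇑σ.symm)^[n] (c i) * twistOp σ d K (w i) := by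
        rw [Finset.sum_comm]
        refine Finset.sum_congr rfl fun i _ => ?_
        simp only [twistOp, Finset.mul_sum]
    _ = 0 := by simp [hw]

end TwistAux

/-- Sums and products of twist-recurrent sequences: let `R` be a `p`-adically complete
and separated ring with algebraically closed residue field `R/pR` and a Frobenius lift
`σ`, and let `z_1, …, z_k ∈ R` reduce mod `p` to elements linearly independent over
`𝔽_p`.  Then there are twist-recurrence relations, with first and last coefficients
units and depending only on the `z_i` (not on the particular sequences), satisfied by
the termwise sum and termwise product of any two sequences of the form
`c_n = Σ_i λ_i^{σ^{-n}} z_i`. -/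
theorem twist_recurrent_sum_and_product {R : Type*} [CommRing R] (p : ℕ)
    [Fact (Nat.Prime p)] [IsAdicComplete (Ideal.span {(p : R)}) R]
    (hfield : IsField (R ⧸ Ideal.span {(p : R)}))
    (halg : letI := hfield.toField; IsAlgClosed (R ⧸ Ideal.span {(p : R)}))
    (σ : R ≃+* R)
    (hσ : ∀ x : R, Ideal.Quotient.mk (Ideal.span {(p : R)}) (σ x) =
      Ideal.Quotient.mk (Ideal.span {(p : R)}) (x ^ p))
    (k : ℕ) (z : Fin k → R)
    (hz : ∀ c : Fin k → ℤ, (∑ i, c i • z i) ∈ Ideal.span {(p : R)} →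
      ∀ i, (c i : ZMod p) = 0) :
    ∃ (K : ℕ) (d e : Fin (K + 1) → R),
      IsUnit (d 0) ∧ IsUnit (d (Fin.last K)) ∧ IsUnit (e 0) ∧ IsUnit (e (Fin.last K)) ∧
      ∀ lam mu : Fin k → R,
        (∀ n : ℕ, ∑ j : Fin (K + 1), d j * (⇑σ)^[(j : ℕ)]
            ((∑ i, (⇑σ.symm)^[n + (j : ℕ)] (lam i) * z i) +
              (∑ i, (⇑σ.symm)^[n + (j : ℕ)] (mu i) * z i)) = 0) ∧
        (∀ n : ℕ, ∑ j : Fin (K + 1), e j * (⇑σ)^[(j : ℕ)]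
            ((∑ i, (⇑σ.symm)^[n + (j : ℕ)] (lam i) * z i) *
              (∑ i, (⇑σ.symm)^[n + (j : ℕ)] (mu i) * z i)) = 0) := by
  classical
  obtain ⟨K₁, d₁, hd10, hd1K, hd1sup, hd1kill⟩ :=
    twist_exists_rel p σ hfield (List.ofFn z)
  obtain ⟨K₂, d₂, hd20, hd2K, hd2sup, hd2kill⟩ :=
    twist_exists_rel p σ hfield
      ((List.finRange k).flatMap fun i => (List.finRange k).map fun i' => z i * z i')
  obtain ⟨d, hd0, hdK, _, hdkill⟩ :=
    twist_pad σ K₁ d₁ hd10 hd1K hd1sup _ hd1kill (max K₁ K₂) (le_max_left _ _)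
  obtain ⟨e, he0, heK, _, hekill⟩ :=
    twist_pad σ K₂ d₂ hd20 hd2K hd2sup _ hd2kill (max K₁ K₂) (le_max_right _ _)
  set K := max K₁ K₂ with hKdef
  refine ⟨K, fun j => d (j : ℕ), fun j => e (j : ℕ), by simpa using hd0,
    by simpa using hdK, by simpa using he0, by simpa using heK, ?_⟩
  intro lam mu
  constructor
  · intro n
    rw [Fin.sum_univ_eq_sum_range (fun j : ℕ => d j * (⇑σ)^[j]
      ((∑ i, (⇑σ.symm)^[n + j] (lam i) * z i) +
        ∑ i, (⇑σ.symm)^[n + j] (mu i) * z i)) (K + 1)]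
    have hre : ∀ j : ℕ, ((∑ i, (⇑σ.symm)^[n + j] (lam i) * z i) +
        ∑ i, (⇑σ.symm)^[n + j] (mu i) * z i)
        = ∑ i, (⇑σ.symm)^[n + j] ((lam + mu) i) * z i := by
      intro j
      rw [← Finset.sum_add_distrib]
      refine Finset.sum_congr rfl fun i _ => ?_
      rw [Pi.add_apply, iterate_map_add, add_mul]
    simp_rw [hre]
    exact twist_recur σ d K z
      (fun i => hdkill (z i) (List.mem_ofFn.mpr ⟨i, rfl⟩)) (lam + mu) n
  · intro n
    rw [Fin.sum_univ_eq_sum_range (fun j : ℕ => e j * (⇑σ)^[j]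
      ((∑ i, (⇑σ.symm)^[n + j] (lam i) * z i) *
        ∑ i, (⇑σ.symm)^[n + j] (mu i) * z i)) (K + 1)]
    have hre : ∀ j : ℕ, ((∑ i, (⇑σ.symm)^[n + j] (lam i) * z i) *
        ∑ i, (⇑σ.symm)^[n + j] (mu i) * z i)
        = ∑ q : Fin k × Fin k,
            (⇑σ.symm)^[n + j] ((fun q : Fin k × Fin k => lam q.1 * mu q.2) q) *
              ((fun q : Fin k × Fin k => z q.1 * z q.2) q) := by
      intro j
      rw [Finset.sum_mul_sum, Fintype.sum_prod_type]
      refine Finset.sum_congr rfl fun i _ => Finset.sum_congr rfl fun i' _ => ?_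
      simp only [iterate_map_mul]
      ring
    simp_rw [hre]
    exact twist_recur σ e K (fun q : Fin k × Fin k => z q.1 * z q.2)
      (fun q => hekill _ (List.mem_flatMap.mpr
        ⟨q.1, List.mem_finRange _, List.mem_map.mpr ⟨q.2, List.mem_finRange _, rfl⟩⟩))
      (fun q => lam q.1 * mu q.2) n
end

section
/- Let R be a p-adically complete ring with Frobenius lift σ, and let z_1, ..., z_k ∈ R have reductions mod p that are linearly independent over F_p. Then every sequence of the form c_n = Σ_{i=1}^k λ_i^{σ^{-n}} z_i (λ_i ∈ R) satisfies the twist-recurrence relation given by expanding along the bottom row the determinant of the (k+1)×(k+1) matrix whose first k rows are (z_i, z_i^σ, ..., z_i^{σ^k}) and last row is (c_n, c_{n+1}^σ, ..., c_{n+k}^{σ^k}); moreover the leading coefficient d_k = det(z_i^{σ^{j-1}}) of this relation is a unit in R. -/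
/-!
The bottom row of the `(k+1) × (k+1)` matrix is the combination of the first `k` rows with
coefficients `λ_i^{σ^{-n}}`, because `σ^j (c_{n+j}) = Σ_i λ_i^{σ^{-n}} σ^j (z_i)`; so its
determinant vanishes.

Modulo `p` the matrix `(z_i^{σ^j})` becomes the Moore matrix `(z̄_i^{p^j})`. If its determinant
vanished, a kernel vector `a ≠ 0` would give the additive polynomial `Σ_j a_j X^{p^j}`, of degree
`< p^k`, vanishing at every `z̄_i` and hence on their whole `𝔽_p`-span, which has `p^k` elements.
Since `(p)` lies in the Jacobson radical of the complete ring `R`, a determinant that is a unit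
mod `p` is a unit.
-/

open Polynomial

theorem eq_zero_of_sum_mul_pow_pow_eq_zero {K : Type*} [CommRing K] [IsDomain K] {p : ℕ}
    (hp : 1 < p) {k : ℕ} (a : Fin k → K) (s : Finset K) (hs : p ^ k ≤ s.card)
    (h : ∀ x ∈ s, ∑ j, a j * x ^ p ^ (j : ℕ) = 0) : a = 0 := by
  set f : K[X] := ∑ j, C (a j) * X ^ p ^ (j : ℕ)
  have hdeg : f.natDegree < p ^ k := by
    refine lt_of_le_of_lt (natDegree_sum_le_of_forall_le _ _ (n := p ^ k - 1) fun j _ => ?_)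
      (Nat.sub_lt (by positivity) one_pos)
    refine (natDegree_C_mul_X_pow_le _ _).trans ?_
    have := Nat.pow_lt_pow_right hp j.isLt
    omega
  have hf : f = 0 := eq_zero_of_natDegree_lt_card_of_eval_eq_zero' f s
    (fun x hx => by simpa [f, eval_finsetSum] using h x hx) (hdeg.trans_le hs)
  ext j
  have hinj : Function.Injective (p ^ · : ℕ → ℕ) := Nat.pow_right_injective hp
  simpa [f, finsetSum_coeff, coeff_C_mul_X_pow, hinj.eq_iff, Fin.val_inj] using
    congr_arg (coeff · (p ^ (j : ℕ))) hf

theorem linearIndependent_zmod_of_forall_int_sum_eq_zero {ι M : Type*} [Fintype ι]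
    [AddCommGroup M] {n : ℕ} [Module (ZMod n) M] {v : ι → M}
    (h : ∀ c : ι → ℤ, ∑ i, c i • v i = 0 → ∀ i, (c i : ZMod n) = 0) :
    LinearIndependent (ZMod n) v := by
  refine Fintype.linearIndependent_iff.2 fun g hg i => ?_
  simpa using h (fun i => (g i).cast) (by simpa [← Int.cast_smul_eq_zsmul (ZMod n)] using hg) i

def mooreMatrix {K : Type*} [Monoid K] (p : ℕ) {k : ℕ} (v : Fin k → K) :
    Matrix (Fin k) (Fin k) K :=
  Matrix.of fun i j => v i ^ p ^ (j : ℕ)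

theorem det_mooreMatrix_ne_zero {K : Type*} [CommRing K] [IsDomain K] (p : ℕ) [Fact p.Prime]
    [Algebra (ZMod p) K] {k : ℕ} {v : Fin k → K} (hv : LinearIndependent (ZMod p) v) :
    (mooreMatrix p v).det ≠ 0 := by
  classical
  have : CharP K p := charP_of_injective_algebraMap' (ZMod p) p
  intro hdet
  obtain ⟨a, ha, hMa⟩ := Matrix.exists_mulVec_eq_zero_iff.2 hdet
  let F : K →+ K := AddMonoidHom.mk' (fun x => ∑ j, a j * x ^ p ^ (j : ℕ)) fun x y => by
    simp only [add_pow_char_pow, mul_add, Finset.sum_add_distrib]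
  have hFv : ∀ i, F (v i) = 0 := fun i => by
    simpa [F, mooreMatrix, Matrix.mulVec, dotProduct, mul_comm] using congrFun hMa i
  have hF : ∀ g : Fin k → ZMod p, F (Fintype.linearCombination (ZMod p) v g) = 0 := fun g => by
    rw [Fintype.linearCombination_apply, map_sum]
    refine Finset.sum_eq_zero fun i _ => ?_
    rw [← ZMod.natCast_zmod_val (g i), Nat.cast_smul_eq_nsmul, map_nsmul, hFv, smul_zero]
  refine ha (eq_zero_of_sum_mul_pow_pow_eq_zero (Fact.out : p.Prime).one_lt a
    (Finset.univ.image (Fintype.linearCombination (ZMod p) v)) ?_ ?_)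
  · rw [Finset.card_image_of_injective _ hv.fintypeLinearCombination_injective]
    simp
  · simpa [F] using hF

theorem Matrix.det_eq_zero_of_last_row_eq_sum {R : Type*} [CommRing R] {k : ℕ}
    (M : Matrix (Fin (k + 1)) (Fin (k + 1)) R) (w : Fin k → R)
    (h : M (Fin.last k) = ∑ i, w i • M i.castSucc) : M.det = 0 := by
  have := M.det_updateRow_sum (Fin.last k) (Fin.snoc w 0)
  simpa only [Fin.sum_univ_castSucc, Fin.snoc_castSucc, Fin.snoc_last, zero_smul, add_zero, ← h,
    Matrix.updateRow_eq_self] using this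

theorem RingEquiv.iterate_sum_iterate_symm_mul {R ι : Type*} [CommRing R] [Fintype ι]
    (σ : R ≃+* R) (lam z : ι → R) (n j : ℕ) :
    (⇑σ)^[j] (∑ i, (⇑σ.symm)^[n + j] (lam i) * z i) =
      ∑ i, (⇑σ.symm)^[n] (lam i) * (⇑σ)^[j] (z i) := by
  have hσj : (⇑σ)^[j] = ⇑((σ : R →+* R) ^ j) := by
    rw [RingHom.coe_pow]; rfl
  simp only [hσj, map_sum, map_mul]
  rw [← hσj, add_comm, Function.iterate_add]
  simp only [Function.comp_apply, (Function.LeftInverse.iterate σ.apply_symm_apply j) _]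

theorem determinantal_twist_recurrence_general {R : Type*} [CommRing R] (p : ℕ)
    [Fact (Nat.Prime p)] [IsAdicComplete (Ideal.span {(p : R)}) R]
    (hfield : IsField (R ⧸ Ideal.span {(p : R)}))
    (σ : R ≃+* R)
    (hσ : ∀ x : R, Ideal.Quotient.mk (Ideal.span {(p : R)}) (σ x) =
      Ideal.Quotient.mk (Ideal.span {(p : R)}) (x ^ p))
    (k : ℕ) (z : Fin k → R)
    (hz : ∀ c : Fin k → ℤ, (∑ i, c i • z i) ∈ Ideal.span {(p : R)} →
      ∀ i, (c i : ZMod p) = 0)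
    (lam : Fin k → R) (c : ℕ → R)
    (hc : ∀ n, c n = ∑ i, (⇑σ.symm)^[n] (lam i) * z i) :
    (∀ n : ℕ,
      Matrix.det (Matrix.of fun i j : Fin (k + 1) =>
        if h : (i : ℕ) < k then (⇑σ)^[(j : ℕ)] (z ⟨i, h⟩)
        else (⇑σ)^[(j : ℕ)] (c (n + (j : ℕ)))) = 0) ∧
    IsUnit (Matrix.det (Matrix.of fun i j : Fin k => (⇑σ)^[(j : ℕ)] (z i))) := by
  set I := Ideal.span {(p : R)}
  refine ⟨fun n => Matrix.det_eq_zero_of_last_row_eq_sum _ (fun i => (⇑σ.symm)^[n] (lam i)) ?_, ?_⟩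
  · ext j
    simp [hc, Finset.sum_apply, RingEquiv.iterate_sum_iterate_symm_mul]
  let := hfield.toField
  have : CharP (R ⧸ I) p := by
    have : Nontrivial (R ⧸ I) := ⟨hfield.exists_pair_ne⟩
    rw [CharP.charP_iff_prime_eq_zero Fact.out, ← map_natCast (Ideal.Quotient.mk I),
      Ideal.Quotient.eq_zero_iff_mem]
    exact Ideal.mem_span_singleton_self _
  let := ZMod.algebra (R ⧸ I) p
  have hmoore : (Ideal.Quotient.mk I).mapMatrix (Matrix.of fun i j : Fin k => (⇑σ)^[j] (z i)) =
      mooreMatrix p (Ideal.Quotient.mk I ∘ z) := by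
    have hfrob : Function.Semiconj (Ideal.Quotient.mk I) σ (· ^ p) := fun x => by
      rw [hσ, map_pow]
    ext i j
    simpa [mooreMatrix, pow_iterate] using hfrob.iterate_right j (z i)
  have hli : LinearIndependent (ZMod p) (Ideal.Quotient.mk I ∘ z) :=
    linearIndependent_zmod_of_forall_int_sum_eq_zero fun c hc =>
      hz c (Ideal.Quotient.eq_zero_iff_mem.1 (by simpa [map_sum] using hc))
  have := isLocalHom_of_le_jacobson_bot I (IsAdicComplete.le_jacobson_bot I)
  refine IsUnit.of_map (Ideal.Quotient.mk I) _ ?_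
  rw [RingHom.map_det, hmoore]
  exact (det_mooreMatrix_ne_zero p hli).isUnit

/-- The determinantal twist-recurrence relation: let `R` be a `p`-adically complete and
separated ring with algebraically closed residue field and Frobenius lift `σ`, and let
`z_1, …, z_k ∈ R` reduce mod `p` to `𝔽_p`-linearly independent elements.  Every sequence
`c_n = Σ_i λ_i^{σ^{-n}} z_i` makes the `(k+1) × (k+1)` determinant with rows
`(z_i, z_i^σ, …, z_i^{σ^k})` and bottom row `(c_n, c_{n+1}^σ, …, c_{n+k}^{σ^k})` vanish;
expanding along the bottom row, this is a twist-recurrence relation whose leading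
coefficient `det (z_i^{σ^{j-1}})` is a unit of `R`. -/
theorem determinantal_twist_recurrence {R : Type*} [CommRing R] (p : ℕ)
    [Fact (Nat.Prime p)] [IsAdicComplete (Ideal.span {(p : R)}) R]
    (hfield : IsField (R ⧸ Ideal.span {(p : R)}))
    (halg : letI := hfield.toField; IsAlgClosed (R ⧸ Ideal.span {(p : R)}))
    (σ : R ≃+* R)
    (hσ : ∀ x : R, Ideal.Quotient.mk (Ideal.span {(p : R)}) (σ x) =
      Ideal.Quotient.mk (Ideal.span {(p : R)}) (x ^ p))
    (k : ℕ) (z : Fin k → R)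
    (hz : ∀ c : Fin k → ℤ, (∑ i, c i • z i) ∈ Ideal.span {(p : R)} →
      ∀ i, (c i : ZMod p) = 0)
    (lam : Fin k → R) (c : ℕ → R)
    (hc : ∀ n, c n = ∑ i, (⇑σ.symm)^[n] (lam i) * z i) :
    (∀ n : ℕ,
      Matrix.det (Matrix.of fun i j : Fin (k + 1) =>
        if h : (i : ℕ) < k then (⇑σ)^[(j : ℕ)] (z ⟨i, h⟩)
        else (⇑σ)^[(j : ℕ)] (c (n + (j : ℕ)))) = 0) ∧
    IsUnit (Matrix.det (Matrix.of fun i j : Fin k => (⇑σ)^[(j : ℕ)] (z i))) :=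
  determinantal_twist_recurrence_general p hfield σ hσ k z hz lam c hc
end

section
/- For a, b ∈ ℕ with a ≥ 1, the set S_{a,b} = { (1/a)(n − b_1 p^{-1} − b_2 p^{-2} − ...) : n ∈ ℕ, b_i ∈ {0,...,p−1}, Σ b_i ≤ b } is a well-ordered subset of ℚ (has no infinite strictly decreasing sequence). -/
section Aux
variable (p : ℕ)

def valc (c : ℕ →₀ ℕ) : ℚ := ∑ i ∈ c.support, (c i : ℚ) * (p : ℚ) ^ (-(i + 1 : ℤ))

lemma valc_eq_sum (c : ℕ →₀ ℕ) :
    valc p c = c.sum fun i m => (m : ℚ) * (p : ℚ) ^ (-(i + 1 : ℤ)) := rfl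

variable {p} (hp : 2 ≤ p)
include hp

lemma q_pos : (0:ℚ) < p := by exact_mod_cast Nat.lt_of_lt_of_le (by norm_num) hp

lemma q_one_le : (1:ℚ) ≤ p := by exact_mod_cast Nat.le_trans (by norm_num) hp

lemma term_nonneg (m : ℕ) (i : ℕ) : (0:ℚ) ≤ (m : ℚ) * (p : ℚ) ^ (-(i + 1 : ℤ)) := by
  have := q_pos hp
  positivity

lemma valc_nonneg (c : ℕ →₀ ℕ) : 0 ≤ valc p c :=
  Finset.sum_nonneg fun i _ => term_nonneg hp _ i

lemma zpow_le_one' (i : ℕ) : (p : ℚ) ^ (-(i + 1 : ℤ)) ≤ 1 :=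
  zpow_le_one_of_nonpos₀ (q_one_le hp) (by omega)

lemma valc_le_sum (c : ℕ →₀ ℕ) : valc p c ≤ (c.sum fun _ m => m : ℕ) := by
  rw [valc]
  have : ((c.sum fun _ m => m : ℕ) : ℚ) = ∑ i ∈ c.support, (c i : ℚ) := by
    rw [Finsupp.sum, Nat.cast_sum]
  rw [this]
  refine Finset.sum_le_sum fun i _ => ?_
  calc (c i : ℚ) * (p : ℚ) ^ (-(i + 1 : ℤ)) ≤ (c i : ℚ) * 1 :=
        mul_le_mul_of_nonneg_left (zpow_le_one' hp i) (by positivity)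
    _ = c i := mul_one _

lemma valc_le_min (c : ℕ →₀ ℕ) (h : c.support.Nonempty) :
    valc p c ≤ (c.sum fun _ m => m : ℕ) * (p : ℚ) ^ (-(c.support.min' h + 1 : ℤ)) := by
  rw [valc]
  have : ((c.sum fun _ m => m : ℕ) : ℚ) = ∑ i ∈ c.support, (c i : ℚ) := by
    rw [Finsupp.sum, Nat.cast_sum]
  rw [this, Finset.sum_mul]
  refine Finset.sum_le_sum fun i hi => ?_
  refine mul_le_mul_of_nonneg_left ?_ (by positivity)
  refine zpow_le_zpow_right₀ (q_one_le hp) ?_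
  have := Finset.min'_le _ i hi
  omega

/-- core lemma: no strictly increasing sequence of digit-configuration values with
bounded digit sum -/
lemma no_strictMono : ∀ b : ℕ, ∀ t : ℕ → ℚ, StrictMono t →
    (∀ k, ∃ c : ℕ →₀ ℕ, (c.sum fun _ m => m) ≤ b ∧ t k = valc p c) → False := by
  intro b
  induction b using Nat.strong_induction_on with
  | _ b IH =>
  intro t ht hrep
  choose c hc1 hc2 using hrep
  have ht0 : 0 ≤ t 0 := (hc2 0) ▸ valc_nonneg hp _
  set ε := t 1 with hεdef
  have hε : 0 < ε := lt_of_le_of_lt ht0 (ht Nat.zero_lt_one)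
  have htk : ∀ k, ε ≤ t (k + 1) := fun k => ht.monotone (by omega)
  have hne : ∀ k, (c (k + 1)).support.Nonempty := by
    intro k
    by_contra h
    rw [Finset.not_nonempty_iff_eq_empty] at h
    have : t (k + 1) = 0 := by rw [hc2, valc, h, Finset.sum_empty]
    exact absurd (htk k) (by rw [this]; exact not_le.2 hε)
  set v : ℕ → ℕ := fun k => (c (k + 1)).support.min' (hne k) with hvdef
  have hbound : ∀ k, ε ≤ (b : ℚ) * (p : ℚ) ^ (-(v k + 1 : ℤ)) := by
    intro k
    refine le_trans (htk k) ?_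
    rw [hc2]
    refine le_trans (valc_le_min hp _ (hne k)) ?_
    refine mul_le_mul_of_nonneg_right ?_ (le_of_lt (by positivity))
    exact_mod_cast hc1 (k + 1)
  obtain ⟨V, hV⟩ := exists_nat_gt ((b : ℚ) / ε)
  have hvV : ∀ k, v k < V := by
    intro k
    have h1 : (v k : ℚ) < (p : ℚ) ^ ((v k : ℤ) + 1) := by
      have hn : v k < p ^ (v k + 1) := by
        calc v k < 2 ^ (v k) := Nat.lt_two_pow_self
          _ ≤ p ^ (v k) := Nat.pow_le_pow_left hp _
          _ ≤ p ^ (v k + 1) := Nat.pow_le_pow_right (by omega) (by omega)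
      calc ((v k : ℚ)) < ((p ^ (v k + 1) : ℕ) : ℚ) := by exact_mod_cast hn
        _ = (p : ℚ) ^ ((v k : ℤ) + 1) := by
            have he : ((v k : ℤ) + 1) = ((v k + 1 : ℕ) : ℤ) := by push_cast; ring
            rw [he, zpow_natCast]; push_cast; ring
    have h2 : (p : ℚ) ^ ((v k : ℤ) + 1) ≤ (b : ℚ) / ε := by
      rw [le_div_iff₀ hε]
      have := hbound k
      have hq := q_pos hp
      rw [mul_comm]
      calc ε * (p : ℚ) ^ ((v k : ℤ) + 1)
          ≤ ((b : ℚ) * (p : ℚ) ^ (-(v k + 1 : ℤ))) * (p : ℚ) ^ ((v k : ℤ) + 1) := by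
            exact mul_le_mul_of_nonneg_right this (by positivity)
        _ = (b : ℚ) := by
            rw [mul_assoc, ← zpow_add₀ (ne_of_gt hq)]
            have he : (-(v k + 1 : ℤ) + ((v k : ℤ) + 1)) = 0 := by ring
            rw [he, zpow_zero, mul_one]
    have : (v k : ℚ) < V := lt_of_lt_of_le (lt_of_lt_of_le h1 h2) (le_of_lt hV)
    exact_mod_cast this
  set d : ℕ → ℕ := fun k => c (k + 1) (v k) with hddef
  have hd1 : ∀ k, 1 ≤ d k := by
    intro k
    have : v k ∈ (c (k + 1)).support := Finset.min'_mem _ _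
    rw [Finsupp.mem_support_iff] at this
    show 1 ≤ c (k + 1) (v k)
    omega
  have hdb : ∀ k, d k ≤ b := by
    intro k
    refine le_trans ?_ (hc1 (k + 1))
    have hm : v k ∈ (c (k + 1)).support := Finset.min'_mem _ _
    calc d k = (fun _ m => m) (v k) (c (k + 1) (v k)) := rfl
      _ ≤ (c (k+1)).sum fun _ m => m := by
          rw [Finsupp.sum]
          exact Finset.single_le_sum (fun i _ => Nat.zero_le _) hm
  have hVpos : 0 < V := Nat.lt_of_le_of_lt (Nat.zero_le _) (hvV 0)
  set F : ℕ → Fin V × Fin (b + 1) := fun k => (⟨v k, hvV k⟩, ⟨d k, by have := hdb k; omega⟩)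
    with hFdef
  obtain ⟨⟨v₀, d₀⟩, hfib⟩ := Finite.exists_infinite_fiber F
  classical
  haveI : Infinite (F ⁻¹' {(v₀, d₀)} : Set ℕ) := hfib
  set g := Nat.orderEmbeddingOfSet (F ⁻¹' {(v₀, d₀)}) with hgdef
  have hgmem : ∀ j, F (g j) = (v₀, d₀) := by
    intro j
    have : g j ∈ F ⁻¹' {(v₀, d₀)} := by
      rw [hgdef, Nat.orderEmbeddingOfSet_apply]
      exact (Nat.Subtype.ofNat (F ⁻¹' {(v₀, d₀)}) j).2
    simpa using this
  have hveq : ∀ j, v (g j) = v₀.val := fun j => congrArg (fun x => x.1.val) (hgmem j)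
  have hdeq : ∀ j, d (g j) = d₀.val := fun j => congrArg (fun x => x.2.val) (hgmem j)
  -- new sequence
  set s : ℕ → ℚ := fun j => t (g j + 1) - (d₀.val : ℚ) * (p : ℚ) ^ (-(v₀.val + 1 : ℤ))
    with hsdef
  have hs : StrictMono s := by
    intro i j hij
    have : g i < g j := g.strictMono hij
    exact sub_lt_sub_right (ht (by omega)) _
  have hd₀1 : 1 ≤ d₀.val := hdeq 0 ▸ hd1 (g 0)
  have hd₀b : d₀.val ≤ b := hdeq 0 ▸ hdb (g 0)
  refine IH (b - d₀.val) (by omega) s hs ?_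
  intro j
  refine ⟨(c (g j + 1)).erase v₀.val, ?_, ?_⟩
  · have h : c (g j + 1) v₀.val + (((c (g j + 1)).erase v₀.val).sum fun _ m => m)
        = (c (g j + 1)).sum fun _ m => m :=
      Finsupp.add_sum_erase' (c (g j + 1)) v₀.val (fun _ m => m) (fun _ => rfl)
    have hc := hc1 (g j + 1)
    have hcv : c (g j + 1) v₀.val = d₀.val := by rw [← hveq j]; exact hdeq j
    omega
  · have hdecomp := Finsupp.add_sum_erase' (c (g j + 1)) v₀.val
      (fun i m => (m : ℚ) * (p : ℚ) ^ (-(i + 1 : ℤ))) (fun i => by simp)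
    have hcv : c (g j + 1) v₀.val = d₀.val := by rw [← hveq j]; exact hdeq j
    rw [hsdef]
    simp only [hc2, valc_eq_sum]
    rw [← hdecomp, hcv]
    ring
end Aux

/-- The set `S_{a,b} = { (1/a)(n − b_1 p^{-1} − b_2 p^{-2} − ⋯) : n ∈ ℕ,
b_i ∈ {0,…,p−1}, Σ b_i ≤ b } ⊆ ℚ`; the digits are encoded by a finitely supported
function `c : ℕ →₀ ℕ`, the digit of `p^{-(i+1)}` being `c i`. -/
def Sab (p a b : ℕ) : Set ℚ :=
  { x : ℚ | ∃ (n : ℕ) (c : ℕ →₀ ℕ), (∀ i, c i ≤ p - 1) ∧ (c.sum fun _ m => m) ≤ b ∧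
      x = ((n : ℚ) - ∑ i ∈ c.support, (c i : ℚ) * (p : ℚ) ^ (-(i + 1 : ℤ))) / a }

/-- For `a ≥ 1`, the set `S_{a,b}` is a well-ordered subset of `ℚ`. -/
theorem Sab_isWF (p : ℕ) [Fact (Nat.Prime p)] (a b : ℕ) (ha : 1 ≤ a) :
    (Sab p a b).IsWF := by
  have hp : 2 ≤ p := (Fact.out : Nat.Prime p).two_le
  rw [Set.isWF_iff_no_descending_seq]
  intro f hf hmem
  choose n c hdig hsum hx using hmem
  have ha' : (0:ℚ) < a := by exact_mod_cast ha
  have hval : ∀ k, valc p (c k) = (n k : ℚ) - a * f k := by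
    intro k
    have hx' : f k = ((n k : ℚ) - valc p (c k)) / a := hx k
    field_simp at hx'
    linarith
  have hvb : ∀ k, valc p (c k) ≤ (b : ℚ) := by
    intro k
    refine le_trans (valc_le_sum hp _) ?_
    exact_mod_cast hsum k
  have hnb : ∀ k, (n k : ℚ) ≤ a * f 0 + b := by
    intro k
    have h1 : (n k : ℚ) = a * f k + valc p (c k) := by have := hval k; linarith
    have h2 : f k ≤ f 0 := hf.antitone (Nat.zero_le k)
    have h3 : (a : ℚ) * f k ≤ a * f 0 := mul_le_mul_of_nonneg_left h2 (le_of_lt ha')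
    have := hvb k
    linarith
  obtain ⟨N, hN⟩ := exists_nat_gt ((a : ℚ) * f 0 + (b : ℚ))
  have hnN : ∀ k, n k < N := by
    intro k
    have : (n k : ℚ) < N := lt_of_le_of_lt (hnb k) hN
    exact_mod_cast this
  classical
  set F : ℕ → Fin N := fun k => ⟨n k, hnN k⟩ with hFdef
  obtain ⟨n₀, hfib⟩ := Finite.exists_infinite_fiber F
  haveI : Infinite (F ⁻¹' {n₀} : Set ℕ) := hfib
  set g := Nat.orderEmbeddingOfSet (F ⁻¹' {n₀}) with hgdef
  have hgmem : ∀ j, n (g j) = n₀.val := by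
    intro j
    have : g j ∈ F ⁻¹' {n₀} := by
      rw [hgdef, Nat.orderEmbeddingOfSet_apply]
      exact (Nat.Subtype.ofNat (F ⁻¹' {n₀}) j).2
    have h := (Set.mem_preimage.mp this)
    rw [Set.mem_singleton_iff] at h
    exact congrArg Fin.val h
  set u : ℕ → ℚ := fun j => (n₀.val : ℚ) - a * f (g j) with hudef
  have hu : StrictMono u := by
    intro i j hij
    have h1 : g i < g j := g.strictMono hij
    have h2 : f (g j) < f (g i) := hf h1
    have h3 : (a : ℚ) * f (g j) < a * f (g i) := by
      exact mul_lt_mul_of_pos_left h2 ha'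
    simp only [hudef]
    linarith
  refine no_strictMono hp b u hu ?_
  intro j
  refine ⟨c (g j), hsum _, ?_⟩
  have := hval (g j)
  rw [hgmem j] at this
  simp only [hudef]
  rw [valc_eq_sum] at this
  exact this.symm
end

section
/- Let K be an algebraically closed field of characteristic p, and consider the Hahn series ring K((t^ℚ)). Every element x of the subring consisting of series supported on some S_{a,b} has support of order type at most ω^ω; in particular, the support of any such x, being a well-ordered subset of ℚ, embeds order-preservingly into the ordinal ω^ω. -/
open Ordinal

namespace SabAux

/-- `Tsum U K a len = Σ_{i<len} ω^(2(K-(a+i))) * U (a+i)`. -/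
noncomputable def Tsum (U : ℕ → Ordinal) (K : ℕ) : ℕ → ℕ → Ordinal
  | _, 0 => 0
  | a, (len+1) => Tsum U K a len + (ω : Ordinal) ^ ((2*(K-(a+len)) : ℕ) : Ordinal) * U (a+len)

lemma Tsum_congr {U W : ℕ → Ordinal} {K a len : ℕ}
    (h : ∀ t, a ≤ t → t < a + len → U t = W t) : Tsum U K a len = Tsum W K a len := by
  induction len with
  | zero => rfl
  | succ l ih =>
    rw [Tsum, Tsum, ih (fun t h1 h2 => h t h1 (by omega)),
      h (a+l) (by omega) (by omega)]

lemma Tsum_split (U : ℕ → Ordinal) (K a l1 l2 : ℕ) :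
    Tsum U K a (l1 + l2) = Tsum U K a l1 + Tsum U K (a + l1) l2 := by
  induction l2 with
  | zero => simp [Tsum]
  | succ l ih =>
    show Tsum U K a (l1 + l + 1) = _
    rw [Tsum, ih, Tsum, add_assoc]
    have h2 : a + (l1 + l) = a + l1 + l := by omega
    rw [h2]

lemma Tsum_lt {U : ℕ → Ordinal} {K a len : ℕ} (hU : ∀ t, U t ≤ ω)
    (h : a + len ≤ K + 1) :
    Tsum U K a len < (ω : Ordinal) ^ ((2*(K+1-a) : ℕ) : Ordinal) := by
  induction len with
  | zero =>
    exact opow_pos _ omega0_pos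
  | succ l ih =>
    rw [Tsum]
    apply principal_add_omega0_opow _ (ih (by omega))
    calc (ω : Ordinal) ^ ((2*(K-(a+l)) : ℕ) : Ordinal) * U (a+l)
        ≤ (ω : Ordinal) ^ ((2*(K-(a+l)) : ℕ) : Ordinal) * ω := by
          exact mul_le_mul_right (hU _) _
      _ = (ω : Ordinal) ^ ((2*(K-(a+l)) + 1 : ℕ) : Ordinal) := by
          rw [Nat.cast_add, Nat.cast_one, opow_add, opow_one]
      _ < (ω : Ordinal) ^ ((2*(K+1-a) : ℕ) : Ordinal) := by
          rw [opow_lt_opow_iff_right one_lt_omega0, Nat.cast_lt]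
          omega

/-- Main lexicographic monotonicity. -/
lemma Tsum_lt_Tsum {U W : ℕ → Ordinal} {K L t₀ : ℕ}
    (hU : ∀ t, U t ≤ ω) (hW : ∀ t, W t ≤ ω)
    (hL : L ≤ K + 1) (ht : t₀ < L)
    (heq : ∀ t, t < t₀ → U t = W t) (hlt : U t₀ < W t₀) :
    Tsum U K 0 L < Tsum W K 0 L := by
  have hsplit : ∀ V : ℕ → Ordinal, Tsum V K 0 L =
      Tsum V K 0 t₀ + ((ω : Ordinal) ^ ((2*(K-t₀) : ℕ) : Ordinal) * V t₀
        + Tsum V K (t₀+1) (L - (t₀+1))) := by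
    intro V
    obtain ⟨r, hr⟩ : ∃ r, L = t₀ + (1 + r) ∧ r = L - (t₀+1) := ⟨L - (t₀+1), by omega, rfl⟩
    obtain ⟨hr1, hr2⟩ := hr
    rw [hr1, Tsum_split, Tsum_split]
    have e1 : (0:ℕ) + t₀ = t₀ := Nat.zero_add _
    have e2 : t₀ + (1 + r) - (t₀ + 1) = r := by omega
    rw [e1, e2]
    simp only [Tsum, Nat.add_zero, zero_add]
  rw [hsplit U, hsplit W,
    Tsum_congr (U := U) (W := W) (K := K) (a := 0) (len := t₀)
      (fun t _ h2 => heq t (by omega))]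
  apply add_lt_add_right
  have htail : Tsum U K (t₀+1) (L - (t₀+1)) < (ω : Ordinal) ^ ((2*(K-t₀) : ℕ) : Ordinal) := by
    have := Tsum_lt (U := U) (K := K) (a := t₀+1) (len := L - (t₀+1)) hU (by omega)
    have he : 2*(K+1-(t₀+1)) = 2*(K-t₀) := by omega
    rwa [he] at this
  calc (ω:Ordinal) ^ ((2*(K-t₀) : ℕ) : Ordinal) * U t₀ + Tsum U K (t₀+1) (L - (t₀+1))
      < (ω:Ordinal) ^ ((2*(K-t₀) : ℕ) : Ordinal) * U t₀
        + (ω:Ordinal) ^ ((2*(K-t₀) : ℕ) : Ordinal) := add_lt_add_right htail _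
    _ = (ω:Ordinal) ^ ((2*(K-t₀) : ℕ) : Ordinal) * (U t₀ + 1) := by rw [mul_add, mul_one]
    _ ≤ (ω:Ordinal) ^ ((2*(K-t₀) : ℕ) : Ordinal) * W t₀ := by
        apply mul_le_mul_right
        rw [Ordinal.add_one_eq_succ]
        exact Order.succ_le_of_lt hlt
    _ ≤ _ := le_self_add

lemma Tsum_lt_omega_opow_omega {U : ℕ → Ordinal} {K L : ℕ} (hU : ∀ t, U t ≤ ω)
    (hL : L ≤ K + 1) : Tsum U K 0 L < (ω : Ordinal) ^ (ω : Ordinal) := by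
  calc Tsum U K 0 L < (ω : Ordinal) ^ ((2*(K+1-0) : ℕ) : Ordinal) := Tsum_lt hU (by omega)
    _ ≤ (ω : Ordinal) ^ (ω : Ordinal) := opow_le_opow_right omega0_pos (nat_lt_omega0 _).le



variable {p : ℕ}

/-- partial digit sums -/
def Nc (c : ℕ →₀ ℕ) (j : ℕ) : ℕ := ∑ i ∈ Finset.range j, c i

def tot (c : ℕ →₀ ℕ) : ℕ := c.sum fun _ m => m

noncomputable def jslot (c : ℕ →₀ ℕ) (t : ℕ) : ℕ := sInf {j | t < Nc c (j + 1)}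

noncomputable def Vd (c : ℕ →₀ ℕ) (t : ℕ) : Ordinal :=
  if t < tot c then ((jslot c t + 1 : ℕ) : Ordinal) else ω

def rr (p : ℕ) (c : ℕ →₀ ℕ) : ℚ := ∑ i ∈ c.support, (c i : ℚ) * (p : ℚ) ^ (-(i + 1 : ℤ))

lemma Nc_mono (c : ℕ →₀ ℕ) {j j' : ℕ} (h : j ≤ j') : Nc c j ≤ Nc c j' :=
  Finset.sum_le_sum_of_subset (Finset.range_subset_range.2 h)

lemma Nc_congr {c d : ℕ →₀ ℕ} {j : ℕ} (h : ∀ i < j, c i = d i) : Nc c j = Nc d j :=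
  Finset.sum_congr rfl fun i hi => h i (Finset.mem_range.mp hi)

lemma Nc_succ (c : ℕ →₀ ℕ) (k : ℕ) : Nc c (k + 1) = Nc c k + c k :=
  Finset.sum_range_succ _ _

lemma Nc_eq_tot (c : ℕ →₀ ℕ) {M : ℕ} (h : ∀ i ∈ c.support, i < M) : Nc c M = tot c := by
  rw [tot, Finsupp.sum]
  exact (Finset.sum_subset (fun i hi => Finset.mem_range.2 (h i hi))
    (fun i _ hi => Finsupp.notMem_support_iff.mp hi)).symm

lemma support_lt (c : ℕ →₀ ℕ) : ∀ i ∈ c.support, i < c.support.sup id + 1 :=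
  fun i hi => Nat.lt_succ_of_le (Finset.le_sup (f := id) hi)

lemma Nc_le_tot (c : ℕ →₀ ℕ) (j : ℕ) : Nc c j ≤ tot c := by
  set M := max j (c.support.sup id + 1) with hM
  calc Nc c j ≤ Nc c M := Nc_mono c (le_max_left _ _)
    _ = tot c := Nc_eq_tot c (fun i hi => lt_of_lt_of_le (support_lt c i hi) (le_max_right _ _))

lemma slot_nonempty {c : ℕ →₀ ℕ} {t : ℕ} (h : t < tot c) : {j | t < Nc c (j + 1)}.Nonempty := by
  refine ⟨c.support.sup id, ?_⟩
  have : Nc c (c.support.sup id + 1) = tot c :=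
    Nc_eq_tot c (support_lt c)
  simpa [Set.mem_setOf_eq, this]

lemma jslot_mem {c : ℕ →₀ ℕ} {t : ℕ} (h : t < tot c) : t < Nc c (jslot c t + 1) :=
  Nat.sInf_mem (slot_nonempty h)

lemma jslot_le {c : ℕ →₀ ℕ} {t k : ℕ} (h : t < Nc c (k + 1)) : jslot c t ≤ k :=
  Nat.sInf_le h

lemma jslot_gt {c : ℕ →₀ ℕ} {t k : ℕ} (ht : t < tot c) (h : Nc c (k + 1) ≤ t) :
    k < jslot c t := by
  by_contra hk
  push_neg at hk
  exact absurd (jslot_mem ht) (by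
    have := Nc_mono c (Nat.add_le_add_right hk 1)
    omega)

/-! ### rationals -/

lemma pw (hp : p ≠ 0) (i : ℕ) : (p : ℚ) ^ (-(i + 1 : ℤ)) = ((p : ℚ) ^ (i + 1))⁻¹ := by
  rw [zpow_neg]
  congr 1

lemma pw_pos (hp : p ≠ 0) (i : ℕ) : 0 < (p : ℚ) ^ (-(i + 1 : ℤ)) := by
  rw [pw hp]
  positivity

lemma rr_eq_range (hp : p ≠ 0) (c : ℕ →₀ ℕ) {M : ℕ} (h : ∀ i ∈ c.support, i < M) :
    rr p c = ∑ i ∈ Finset.range M, (c i : ℚ) * (p : ℚ) ^ (-(i + 1 : ℤ)) :=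
  Finset.sum_subset (fun i hi => Finset.mem_range.2 (h i hi))
    (fun i _ hi => by rw [Finsupp.notMem_support_iff.mp hi]; simp)

lemma geom (hp : p ≠ 0) (M : ℕ) :
    ∑ i ∈ Finset.range M, ((p : ℚ) - 1) * (p : ℚ) ^ (-(i + 1 : ℤ)) = 1 - ((p : ℚ) ^ M)⁻¹ := by
  induction M with
  | zero => simp
  | succ M ih =>
    rw [Finset.sum_range_succ, ih, pw hp]
    have hp0 : (p : ℚ) ≠ 0 := Nat.cast_ne_zero.2 hp
    have h1 : (p : ℚ) ^ M ≠ 0 := pow_ne_zero _ hp0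
    have h2 : (p : ℚ) ^ (M + 1) ≠ 0 := pow_ne_zero _ hp0
    field_simp
    ring

lemma rr_nonneg (hp : p ≠ 0) (c : ℕ →₀ ℕ) : 0 ≤ rr p c :=
  Finset.sum_nonneg fun i _ => mul_nonneg (Nat.cast_nonneg _) (pw_pos hp i).le

lemma digit_cast_le (hp : 2 ≤ p) {c : ℕ →₀ ℕ} (hd : ∀ i, c i ≤ p - 1) (i : ℕ) :
    (c i : ℚ) ≤ (p : ℚ) - 1 := by
  have := hd i
  have h1 : (c i : ℚ) ≤ ((p - 1 : ℕ) : ℚ) := Nat.cast_le.2 this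
  rwa [Nat.cast_sub (by omega), Nat.cast_one] at h1

lemma rr_le (hp : 2 ≤ p) {c : ℕ →₀ ℕ} (hd : ∀ i, c i ≤ p - 1) {M : ℕ}
    (h : ∀ i ∈ c.support, i < M) : rr p c ≤ 1 - ((p : ℚ) ^ M)⁻¹ := by
  have hp0 : p ≠ 0 := by omega
  rw [rr_eq_range hp0 c h, ← geom hp0 M]
  exact Finset.sum_le_sum fun i _ =>
    mul_le_mul_of_nonneg_right (digit_cast_le hp hd i) (pw_pos hp0 i).le

lemma rr_lt_one (hp : 2 ≤ p) {c : ℕ →₀ ℕ} (hd : ∀ i, c i ≤ p - 1) : rr p c < 1 := by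
  have hp0 : (p : ℚ) ≠ 0 := Nat.cast_ne_zero.2 (by omega)
  have := rr_le hp hd (support_lt c)
  have hpos : (0 : ℚ) < ((p : ℚ) ^ (c.support.sup id + 1))⁻¹ := by positivity
  linarith

lemma rr_lt_rr (hp : 2 ≤ p) {c d : ℕ →₀ ℕ} (hdc : ∀ i, c i ≤ p - 1) {k : ℕ}
    (hpre : ∀ i < k, c i = d i) (hk : c k < d k) : rr p c < rr p d := by
  have hp0 : p ≠ 0 := by omega
  have hpq : (p : ℚ) ≠ 0 := Nat.cast_ne_zero.2 hp0
  set M := max (k + 1) (max (c.support.sup id + 1) (d.support.sup id + 1)) with hM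
  have hMc : ∀ i ∈ c.support, i < M :=
    fun i hi => lt_of_lt_of_le (support_lt c i hi) (le_trans (le_max_left _ _) (le_max_right _ _))
  have hMd : ∀ i ∈ d.support, i < M :=
    fun i hi => lt_of_lt_of_le (support_lt d i hi) (le_trans (le_max_right _ _) (le_max_right _ _))
  have hkM : k + 1 ≤ M := le_max_left _ _
  rw [rr_eq_range hp0 c hMc, rr_eq_range hp0 d hMd]
  -- split sums at k+1
  have split : ∀ f : ℕ → ℚ, ∑ i ∈ Finset.range M, f i
      = (∑ i ∈ Finset.range k, f i) + f k + ∑ i ∈ Finset.Ico (k+1) M, f i := by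
    intro f
    rw [Finset.range_eq_Ico, ← Finset.sum_Ico_consecutive _ (Nat.zero_le (k+1)) hkM,
      ← Finset.range_eq_Ico, Finset.sum_range_succ]
  rw [split, split]
  have hA : ∑ i ∈ Finset.range k, (c i : ℚ) * (p : ℚ) ^ (-(i + 1 : ℤ))
      = ∑ i ∈ Finset.range k, (d i : ℚ) * (p : ℚ) ^ (-(i + 1 : ℤ)) :=
    Finset.sum_congr rfl fun i hi => by rw [hpre i (Finset.mem_range.mp hi)]
  have hq : (0:ℚ) < (p : ℚ) ^ (-(k + 1 : ℤ)) := pw_pos hp0 k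
  -- tail bounds
  have htail_c : ∑ i ∈ Finset.Ico (k+1) M, (c i : ℚ) * (p : ℚ) ^ (-(i + 1 : ℤ))
      ≤ (p : ℚ) ^ (-(k + 1 : ℤ)) - ((p : ℚ) ^ M)⁻¹ := by
    have h1 : ∑ i ∈ Finset.Ico (k+1) M, (c i : ℚ) * (p : ℚ) ^ (-(i + 1 : ℤ))
        ≤ ∑ i ∈ Finset.Ico (k+1) M, ((p : ℚ) - 1) * (p : ℚ) ^ (-(i + 1 : ℤ)) :=
      Finset.sum_le_sum fun i _ =>
        mul_le_mul_of_nonneg_right (digit_cast_le hp hdc i) (pw_pos hp0 i).le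
    have h2 : ∑ i ∈ Finset.Ico (k+1) M, ((p : ℚ) - 1) * (p : ℚ) ^ (-(i + 1 : ℤ))
        = (1 - ((p : ℚ) ^ M)⁻¹) - (1 - ((p : ℚ) ^ (k+1))⁻¹) := by
      rw [← geom hp0 M, ← geom hp0 (k+1), Finset.range_eq_Ico,
        ← Finset.sum_Ico_consecutive _ (Nat.zero_le (k+1)) hkM]
      rw [← Finset.range_eq_Ico]; ring
    rw [pw hp0]
    calc _ ≤ _ := h1
      _ = _ := h2
      _ ≤ _ := by ring_nf; rfl
  have htail_d : (0:ℚ) ≤ ∑ i ∈ Finset.Ico (k+1) M, (d i : ℚ) * (p : ℚ) ^ (-(i + 1 : ℤ)) :=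
    Finset.sum_nonneg fun i _ => mul_nonneg (Nat.cast_nonneg _) (pw_pos hp0 i).le
  have hMpos : (0:ℚ) < ((p : ℚ) ^ M)⁻¹ := by positivity
  have hck : (c k : ℚ) + 1 ≤ (d k : ℚ) := by exact_mod_cast hk
  nlinarith [hq, mul_le_mul_of_nonneg_right hck hq.le]

lemma rr_eq_of_eq (hp : p ≠ 0) {c d : ℕ →₀ ℕ} (h : ∀ i, c i = d i) : rr p c = rr p d := by
  have : c = d := Finsupp.ext h
  rw [this]

lemma first_diff (hp : 2 ≤ p) {c d : ℕ →₀ ℕ} (hdc : ∀ i, c i ≤ p - 1)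
    (hdd : ∀ i, d i ≤ p - 1) (h : rr p d < rr p c) :
    ∃ k, (∀ i < k, c i = d i) ∧ d k < c k := by
  have hne : ¬ ∀ i, c i = d i := fun hh => absurd (rr_eq_of_eq (p := p) (by omega) hh) (by
    intro he; rw [he] at h; exact lt_irrefl _ h)
  push_neg at hne
  classical
  have hex : ∃ k, c k ≠ d k := hne
  refine ⟨Nat.find hex, fun i hi => by
    have := Nat.find_min hex hi
    push_neg at this
    exact this, ?_⟩
  have hk : c (Nat.find hex) ≠ d (Nat.find hex) := Nat.find_spec hex
  rcases lt_or_gt_of_ne hk with h1 | h1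
  · exfalso
    have := rr_lt_rr hp hdc (fun i hi => by
      have := Nat.find_min hex hi; push_neg at this; exact this) h1
    exact absurd this (not_lt.2 h.le)
  · exact h1

lemma Vd_le_omega (c : ℕ →₀ ℕ) (t : ℕ) : Vd c t ≤ ω := by
  rw [Vd]; split
  · exact (nat_lt_omega0 _).le
  · exact le_refl _

lemma slots {c d : ℕ →₀ ℕ} {k b : ℕ} (hpre : ∀ i < k, c i = d i) (hk : d k < c k)
    (hbc : tot c ≤ b) (hbd : tot d ≤ b) :
    ∃ t₀ ≤ b, (∀ t < t₀, Vd c t = Vd d t) ∧ Vd c t₀ < Vd d t₀ := by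
  set t₀ := Nc d (k+1) with ht₀
  have hNck : Nc c k = Nc d k := Nc_congr hpre
  have ht₀c : t₀ < Nc c (k+1) := by rw [ht₀, Nc_succ c, Nc_succ d, hNck]; omega
  have ht₀tc : t₀ < tot c := lt_of_lt_of_le ht₀c (Nc_le_tot c _)
  have ht₀d : t₀ ≤ tot d := Nc_le_tot d _
  refine ⟨t₀, le_trans ht₀d hbd, ?_, ?_⟩
  · intro t ht
    have htc : t < tot c := by omega
    have htd : t < tot d := by omega
    rw [Vd, Vd, if_pos htc, if_pos htd]
    have hc_le : jslot c t ≤ k := jslot_le (by omega)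
    have hd_le : jslot d t ≤ k := jslot_le (show t < Nc d (k+1) by omega)
    have heq : jslot c t = jslot d t := by
      apply le_antisymm
      · rcases lt_or_eq_of_le hd_le with h1 | h1
        · apply jslot_le
          have h2 : Nc c (jslot d t + 1) = Nc d (jslot d t + 1) :=
            Nc_congr (fun i hi => hpre i (by omega))
          rw [h2]; exact jslot_mem htd
        · omega
      · rcases lt_or_eq_of_le hc_le with h1 | h1
        · apply jslot_le
          have h2 : Nc d (jslot c t + 1) = Nc c (jslot c t + 1) :=
            (Nc_congr (fun i hi => hpre i (by omega))).symm
          rw [h2]; exact jslot_mem htc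
        · omega
    rw [heq]
  · have h1 : jslot c t₀ ≤ k := jslot_le ht₀c
    rw [Vd, if_pos ht₀tc]
    by_cases h2 : t₀ < tot d
    · rw [Vd, if_pos h2]
      have h3 : k < jslot d t₀ := jslot_gt h2 (le_of_eq ht₀.symm)
      exact_mod_cast (show jslot c t₀ + 1 < jslot d t₀ + 1 by omega)
    · rw [Vd, if_neg h2]
      exact nat_lt_omega0 _


end SabAux


/-- Let `K` be an algebraically closed field of characteristic `p`.  Any Hahn series
`x ∈ K((t^ℚ))` supported on some `S_{a,b}` has support of order type at most `ω^ω`: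
its support embeds order-preservingly into the ordinal `ω^ω`. -/
theorem support_order_type_le_omega_pow_omega (p : ℕ) [Fact (Nat.Prime p)]
    {K : Type*} [Field K] [IsAlgClosed K] [CharP K p]
    (x : HahnSeries ℚ K) (hx : ∃ a b : ℕ, 1 ≤ a ∧ x.support ⊆ Sab p a b) :
    ∃ f : x.support → Ordinal,
      StrictMono f ∧ ∀ i, f i < Ordinal.omega0 ^ Ordinal.omega0 := by
  classical

  obtain ⟨a, b, ha, hsub⟩ := hx
  have hp2 : 2 ≤ p := (Fact.out : p.Prime).two_le
  have hmem : ∀ i : x.support, ∃ (n : ℕ) (c : ℕ →₀ ℕ), (∀ t, c t ≤ p - 1) ∧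
      (c.sum fun _ m => m) ≤ b ∧
      (i : ℚ) = ((n : ℚ) - ∑ t ∈ c.support, (c t : ℚ) * (p : ℚ) ^ (-(t + 1 : ℤ))) / a :=
    fun i => hsub i.2
  choose n c hdig hsum hval using hmem
  have hval' : ∀ i : x.support, (i : ℚ) = ((n i : ℚ) - SabAux.rr p (c i)) / a := hval
  set U : x.support → ℕ → Ordinal :=
    fun i t => if t = 0 then ((n i : ℕ) : Ordinal) else SabAux.Vd (c i) (t - 1) with hU
  have hUle : ∀ i t, U i t ≤ Ordinal.omega0 := by
    intro i t
    rw [hU]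
    dsimp only
    split
    · exact (Ordinal.nat_lt_omega0 _).le
    · exact SabAux.Vd_le_omega _ _
  refine ⟨fun i => SabAux.Tsum (U i) (b + 1) 0 (b + 2), ?_,
    fun i => SabAux.Tsum_lt_omega_opow_omega (hUle i) (by omega)⟩
  intro i j hij
  have hlt : (i : ℚ) < (j : ℚ) := hij
  have ha0 : (0 : ℚ) < (a : ℚ) := by exact_mod_cast (by omega : 0 < a)
  rw [hval' i, hval' j, div_lt_div_iff_of_pos_right ha0] at hlt
  have hRi0 : 0 ≤ SabAux.rr p (c i) := SabAux.rr_nonneg (by omega) _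
  have hRj0 : 0 ≤ SabAux.rr p (c j) := SabAux.rr_nonneg (by omega) _
  have hRi1 : SabAux.rr p (c i) < 1 := SabAux.rr_lt_one hp2 (hdig i)
  have hRj1 : SabAux.rr p (c j) < 1 := SabAux.rr_lt_one hp2 (hdig j)
  rcases Nat.lt_trichotomy (n i) (n j) with hn | hn | hn
  · apply SabAux.Tsum_lt_Tsum (hUle i) (hUle j) (by omega) (show 0 < b + 2 by omega)
      (fun t ht => absurd ht (Nat.not_lt_zero t))
    show U i 0 < U j 0
    rw [hU]
    dsimp only
    rw [if_pos rfl, if_pos rfl]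
    exact_mod_cast hn
  · have hnq : ((n i : ℕ) : ℚ) = ((n j : ℕ) : ℚ) := by exact_mod_cast hn
    have hR : SabAux.rr p (c j) < SabAux.rr p (c i) := by linarith
    obtain ⟨k, hpre, hk⟩ := SabAux.first_diff hp2 (hdig i) (hdig j) hR
    obtain ⟨t₀, ht₀b, hVeq, hVlt⟩ := SabAux.slots hpre hk (hsum i) (hsum j)
    apply SabAux.Tsum_lt_Tsum (hUle i) (hUle j) (by omega) (show t₀ + 1 < b + 2 by omega)
    · intro t ht
      rw [hU]
      dsimp only
      rcases Nat.eq_zero_or_pos t with h0 | h0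
      · subst h0
        rw [if_pos rfl, if_pos rfl, hn]
      · rw [if_neg (by omega), if_neg (by omega)]
        exact hVeq (t - 1) (by omega)
    · show U i (t₀ + 1) < U j (t₀ + 1)
      rw [hU]
      dsimp only
      rw [if_neg (by omega), if_neg (by omega)]
      simpa using hVlt
  · exfalso
    have : ((n j : ℕ) : ℚ) + 1 ≤ ((n i : ℕ) : ℚ) := by exact_mod_cast hn
    linarith
end
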